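/- arXiv:1804.02253 — 8 statements merged into one kernel-verified Lean document; each statement's English description precedes it below -/
import Mathlib

section
/- Let $\mathcal{H}(K)$ denote the set of continuous piecewise linear functions on $[0,1]$ with at most $K$ linear pieces, and let $f(x)=x^2$. Then for every $h \in \mathcal{H}(K)$ we have $\sup_{x\in[0,1]} |h(x) - x^2| \geq 1/(8K^2)$. -/
/-- `h` is affine on the set `s`, i.e. of the form `x ↦ c*x + d` there. -/
def IsAffineOn (h : ℝ → ℝ) (s : Set ℝ) : Prop :=
  ∃ c d : ℝ, ∀ x ∈ s, h x = c * x + d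

/-- `h` is (continuous) piecewise linear on `[0,1]` with at most `K` pieces:
there is a partition of `[0,1]` into at most `K` closed intervals on each of
which `h` is affine. -/
def PiecewiseLinOn (K : ℕ) (h : ℝ → ℝ) : Prop :=
  ∃ n : ℕ, n ≤ K ∧ ∃ t : ℕ → ℝ, t 0 = 0 ∧ t n = 1 ∧
    (∀ i < n, t i ≤ t (i + 1)) ∧
    ∀ i < n, IsAffineOn h (Set.Icc (t i) (t (i + 1)))

lemma mono_chain {t : ℕ → ℝ} {n : ℕ} (h : ∀ i < n, t i ≤ t (i + 1)) :
    ∀ j ≤ n, ∀ i ≤ j, t i ≤ t j := by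
  intro j hj
  induction j with
  | zero => intro i hi; interval_cases i; exact le_refl _
  | succ m ih =>
    intro i hi
    rcases Nat.lt_or_ge i (m + 1) with hlt | hge
    · exact le_trans (ih (by omega) i (by omega)) (h m (by omega))
    · have : i = m + 1 := by omega
      simp [this]

lemma find_piece {t : ℕ → ℝ} {x : ℝ} (h0 : t 0 ≤ x) :
    ∀ n, 0 < n → (∀ i < n, t i ≤ t (i + 1)) → x ≤ t n →
      ∃ i < n, t i ≤ x ∧ x ≤ t (i + 1) := by
  intro n
  induction n with
  | zero => omega
  | succ m ih =>
    intro _ hm h1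
    rcases le_or_gt x (t m) with hle | hlt
    · rcases Nat.eq_zero_or_pos m with rfl | hm0
      · exact ⟨0, by omega, h0, by simpa using h1⟩
      · obtain ⟨i, hi, hx⟩ := ih hm0 (fun i hi => hm i (by omega)) hle
        exact ⟨i, by omega, hx⟩
    · exact ⟨m, Nat.lt_succ_self m, hlt.le, h1⟩

theorem piecewise_linear_sq_approx_lower_bound (K : ℕ) (h : ℝ → ℝ)
    (hh : PiecewiseLinOn K h) :
    (1 : ℝ) / (8 * (K : ℝ) ^ 2) ≤ ⨆ x : Set.Icc (0:ℝ) 1, |h x - (x : ℝ) ^ 2| := by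
  obtain ⟨n, hnK, t, ht0, htn, hmono, haff⟩ := hh
  have hn : 0 < n := by
    rcases Nat.eq_zero_or_pos n with rfl | hn
    · rw [ht0] at htn; norm_num at htn
    · exact hn
  have hnR : (0 : ℝ) < n := by exact_mod_cast hn
  have hKR : (0 : ℝ) < K := by exact_mod_cast lt_of_lt_of_le hn hnK
  -- some gap has length ≥ 1/n
  have hsum : ∑ i ∈ Finset.range n, (t (i + 1) - t i) = 1 := by
    rw [Finset.sum_range_sub, ht0, htn]; ring
  have hgap : ∃ i < n, 1 / (n : ℝ) ≤ t (i + 1) - t i := by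
    by_contra hc
    push_neg at hc
    have hlt : ∑ i ∈ Finset.range n, (t (i + 1) - t i)
        < ∑ _i ∈ Finset.range n, (1 / (n : ℝ)) :=
      Finset.sum_lt_sum_of_nonempty (by simp [hn.ne']) fun i hi =>
        hc i (Finset.mem_range.mp hi)
    rw [hsum, Finset.sum_const, Finset.card_range, nsmul_eq_mul,
      mul_one_div, div_self hnR.ne'] at hlt
    exact lt_irrefl _ hlt
  obtain ⟨i, hi, hgapi⟩ := hgap
  set a := t i with ha_def
  set b := t (i + 1) with hb_def
  obtain ⟨c, d, hcd⟩ := haff i hi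
  have hab : a ≤ b := hmono i hi
  have ha0 : (0 : ℝ) ≤ a := by
    rw [← ht0]; exact mono_chain hmono i (by omega) 0 (by omega)
  have hb1 : b ≤ 1 := by
    rw [← htn]; exact mono_chain hmono n le_rfl (i + 1) (by omega)
  have ha1 : a ≤ 1 := le_trans hab hb1
  have hb0 : (0 : ℝ) ≤ b := le_trans ha0 hab
  set m := (a + b) / 2 with hm_def
  have hm_mem : a ≤ m ∧ m ≤ b := by constructor <;> (rw [hm_def]; linarith)
  -- the key point: error at least (b-a)^2/8 somewhere
  have hmain : ∃ x : Set.Icc (0:ℝ) 1, (b - a) ^ 2 / 8 ≤ |h x - (x : ℝ) ^ 2| := by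
    by_contra hc
    push_neg at hc
    have hea := hc ⟨a, ha0, ha1⟩
    have heb := hc ⟨b, hb0, hb1⟩
    have hem := hc ⟨m, by linarith [hm_mem.1], by linarith [hm_mem.2]⟩
    simp only at hea heb hem
    rw [hcd a ⟨le_refl a, hab⟩] at hea
    rw [hcd b ⟨hab, le_refl b⟩] at heb
    rw [hcd m ⟨hm_mem.1, hm_mem.2⟩] at hem
    have key : (c * a + d - a ^ 2) + (c * b + d - b ^ 2) - 2 * (c * m + d - m ^ 2)
        = -((b - a) ^ 2) / 2 := by rw [hm_def]; ring
    have h1 := abs_lt.mp hea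
    have h2 := abs_lt.mp heb
    have h3 := abs_lt.mp hem
    linarith [h1.1, h2.1, h3.2]
  obtain ⟨x, hx⟩ := hmain
  -- boundedness
  choose C D hCD using haff
  classical
  set C' : ℕ → ℝ := fun j => if hj : j < n then C j hj else 0 with hC'_def
  set D' : ℕ → ℝ := fun j => if hj : j < n then D j hj else 0 with hD'_def
  have hne : (Finset.range n).Nonempty := by simp [hn.ne']
  set M : ℝ := (Finset.range n).sup' hne (fun j => |C' j| + |D' j| + 1) with hM_def
  have hbdd : BddAbove (Set.range fun x : Set.Icc (0:ℝ) 1 => |h x - (x : ℝ) ^ 2|) := by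
    refine ⟨M, ?_⟩
    rintro y ⟨⟨z, hz0, hz1⟩, rfl⟩
    simp only
    obtain ⟨j, hj, hzj⟩ := find_piece (t := t) (x := z) (by rw [ht0]; exact hz0) n hn hmono
      (by rw [htn]; exact hz1)
    have hz : h z = C' j * z + D' j := by
      rw [hC'_def, hD'_def]
      simp only [dif_pos hj]
      exact hCD j hj z ⟨hzj.1, hzj.2⟩
    have habs : |h z - z ^ 2| ≤ |C' j| + |D' j| + 1 := by
      rw [hz]
      have h1 : |C' j * z + D' j - z ^ 2| ≤ |C' j * z| + |D' j| + |z ^ 2| := by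
        calc |C' j * z + D' j - z ^ 2| ≤ |C' j * z + D' j| + |z ^ 2| := abs_sub _ _
          _ ≤ |C' j * z| + |D' j| + |z ^ 2| := by
              gcongr; exact abs_add_le _ _
      have hz_abs : |z| ≤ 1 := abs_le.mpr ⟨by linarith, hz1⟩
      have h2 : |C' j * z| ≤ |C' j| := by
        rw [abs_mul]
        calc |C' j| * |z| ≤ |C' j| * 1 := by gcongr
          _ = |C' j| := mul_one _
      have h3 : |z ^ 2| ≤ 1 := by
        rw [abs_pow]
        calc |z| ^ 2 ≤ 1 ^ 2 := by gcongr
          _ = 1 := one_pow 2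
      linarith
    rw [hM_def]
    exact le_trans habs (Finset.le_sup' (fun j => |C' j| + |D' j| + 1) (Finset.mem_range.mpr hj))
  -- conclude
  have hfinal : (1 : ℝ) / (8 * (K : ℝ) ^ 2) ≤ (b - a) ^ 2 / 8 := by
    have hnK' : (n : ℝ) ≤ K := by exact_mod_cast hnK
    have h1 : (1 : ℝ) / (K : ℝ) ≤ 1 / (n : ℝ) := by
      apply one_div_le_one_div_of_le hnR hnK'
    have h2 : (1 : ℝ) / (K : ℝ) ≤ b - a := le_trans h1 hgapi
    have h3 : ((1 : ℝ) / (K : ℝ)) ^ 2 ≤ (b - a) ^ 2 := by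
      gcongr
    have h4 : ((1 : ℝ) / (K : ℝ)) ^ 2 = 1 / (K : ℝ) ^ 2 := by ring
    rw [h4] at h3
    rw [div_le_div_iff₀ (by positivity) (by norm_num)]
    rw [div_le_iff₀ (by positivity)] at h3
    linarith [h3]
  exact le_trans hfinal (le_ciSup_of_le hbdd x hx)
end

section
/- Let $f:[0,1]\to\mathbb{R}$ satisfy $f' \in L^2[0,1]$. Then $f(x) = f(0) + (f(1)-f(0))x + \sum_{j=0}^\infty \sum_{k=0}^{2^j-1} d_{j,k}\Psi_{j,k}(x)$ with $d_{j,k} = -2^{j/2}(f(\tfrac{k+1}{2^j}) - 2f(\tfrac{k+1/2}{2^j}) + f(\tfrac{k}{2^j}))$, where the series converges in $L^2[0,1]$. -/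
/-!
The partial sum through level `J` is the piecewise linear interpolant of `f` at the nodes
`k / 2 ^ (J + 1)`: adding the level-`n` hat functions corrects the interpolant at the midpoints of
the level-`n` cells. On a cell `[a, b]` the interpolation error at `x` is a convex combination of
`f x - f a` and `f b - f x`, and Cauchy–Schwarz bounds both squares by `(b - a) ∫ₐᵇ g²`.
Integrating over the cell and summing gives `‖f - S J‖₂² ≤ 4 ^ (-(J + 1)) ‖g‖₂²`.
-/

open MeasureTheory Filter

/-- The Faber–Schauder triangular function `Ψ_{j,k}` on `[0,1]` (explicit
piecewise linear form). -/
noncomputable def FSfun (j k : ℕ) (x : ℝ) : ℝ :=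
  (2:ℝ) ^ ((j : ℝ) / 2) * max (x - (k : ℝ) / 2 ^ j) 0
    - (2:ℝ) ^ ((j : ℝ) / 2 + 1) * max (x - ((k : ℝ) + 1 / 2) / 2 ^ j) 0
    + (2:ℝ) ^ ((j : ℝ) / 2) * max (x - ((k : ℝ) + 1) / 2 ^ j) 0

open Set

theorem sq_setIntegral_le_measureReal_mul {α : Type*} [MeasurableSpace α] {μ : Measure α}
    {s : Set α} {g : α → ℝ} (hs : μ s ≠ ⊤) (hg : IntegrableOn g s μ)
    (hg2 : IntegrableOn (fun x => g x ^ 2) s μ) :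
    (∫ x in s, g x ∂μ) ^ 2 ≤ μ.real s * ∫ x in s, g x ^ 2 ∂μ := by
  rcases eq_or_ne (μ s) 0 with h0 | h0
  · simp [Measure.restrict_eq_zero.mpr h0]
  have hpos : 0 < μ.real s := ENNReal.toReal_pos h0 hs
  have hJensen := (even_two.convexOn_pow (𝕜 := ℝ)).map_set_average_le
    (continuous_pow 2).continuousOn isClosed_univ h0 hs (by simp) hg hg2
  simp only [setAverage_eq, smul_eq_mul] at hJensen
  rw [mul_pow, inv_pow, inv_mul_le_iff₀ (by positivity)] at hJensen
  calc _ ≤ _ := hJensen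
    _ = _ := by field_simp

theorem sq_intervalIntegral_le {g : ℝ → ℝ} {a b : ℝ} (hab : a ≤ b) (hg : IntegrableOn g (Icc a b))
    (hg2 : IntegrableOn (fun x => g x ^ 2) (Icc a b)) :
    (∫ x in a..b, g x) ^ 2 ≤ (b - a) * ∫ x in a..b, g x ^ 2 := by
  rw [intervalIntegral.integral_of_le hab, intervalIntegral.integral_of_le hab,
    ← Real.volume_real_Ioc_of_le hab]
  exact sq_setIntegral_le_measureReal_mul measure_Ioc_lt_top.ne (hg.mono_set Ioc_subset_Icc_self)
    (hg2.mono_set Ioc_subset_Icc_self)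

theorem intervalIntegral_eq_sub_of_eq_add_intervalIntegral {f g : ℝ → ℝ} {a b : ℝ}
    (hg : IntegrableOn g (Icc a b)) (hf : ∀ x ∈ Icc a b, f x = f a + ∫ t in a..x, g t)
    {u v : ℝ} (hu : u ∈ Icc a b) (hv : v ∈ Icc a b) :
    ∫ t in u..v, g t = f v - f u := by
  have hint : ∀ x ∈ Icc a b, IntervalIntegrable g volume a x := fun x hx =>
    (hg.mono_set (uIcc_subset_Icc (left_mem_Icc.2 (hu.1.trans hu.2)) hx)).intervalIntegrable
  rw [hf v hv, hf u hu, ← intervalIntegral.integral_interval_sub_left (hint v hv) (hint u hu)]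
  ring

theorem continuousOn_of_eq_add_intervalIntegral {f g : ℝ → ℝ} {a b : ℝ} (hab : a ≤ b)
    (hg : IntegrableOn g (Icc a b)) (hf : ∀ x ∈ Icc a b, f x = f a + ∫ t in a..x, g t) :
    ContinuousOn f (Icc a b) := by
  have hF := intervalIntegral.continuousOn_primitive_interval (μ := volume) (a := a) (b := b)
    (f := g) (by rwa [uIcc_of_le hab])
  rw [uIcc_of_le hab] at hF
  exact (continuousOn_const.add hF).congr hf

theorem eq_add_intervalIntegral_of_Icc_subset {f g : ℝ → ℝ} {a b c d : ℝ}
    (hg : IntegrableOn g (Icc c d)) (hf : ∀ x ∈ Icc c d, f x = f c + ∫ t in c..x, g t)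
    (hsub : Icc a b ⊆ Icc c d) (x : ℝ) (hx : x ∈ Icc a b) :
    f x = f a + ∫ t in a..x, g t := by
  rw [intervalIntegral_eq_sub_of_eq_add_intervalIntegral hg hf
    (hsub (left_mem_Icc.2 (hx.1.trans hx.2))) (hsub hx)]
  ring

noncomputable def linInterp (f : ℝ → ℝ) (a b x : ℝ) : ℝ :=
  f a + (x - a) / (b - a) * (f b - f a)

theorem sq_sub_linInterp_le {f g : ℝ → ℝ} {a b x : ℝ} (hab : a < b)
    (hg : IntegrableOn g (Icc a b)) (hg2 : IntegrableOn (fun x => g x ^ 2) (Icc a b))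
    (hf : ∀ x ∈ Icc a b, f x = f a + ∫ u in a..x, g u) (hx : x ∈ Icc a b) :
    (f x - linInterp f a b x) ^ 2 ≤ (b - a) * ∫ u in a..b, g u ^ 2 := by
  have hax : Icc a x ⊆ Icc a b := Icc_subset_Icc_right hx.2
  have hxb : Icc x b ⊆ Icc a b := Icc_subset_Icc_left hx.1
  have hA : (f x - f a) ^ 2 ≤ (x - a) * ∫ u in a..x, g u ^ 2 := by
    rw [← intervalIntegral_eq_sub_of_eq_add_intervalIntegral hg hf (left_mem_Icc.2 hab.le) hx]
    exact sq_intervalIntegral_le hx.1 (hg.mono_set hax) (hg2.mono_set hax)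
  have hB : (f b - f x) ^ 2 ≤ (b - x) * ∫ u in x..b, g u ^ 2 := by
    rw [← intervalIntegral_eq_sub_of_eq_add_intervalIntegral hg hf hx (right_mem_Icc.2 hab.le)]
    exact sq_intervalIntegral_le hx.2 (hg.mono_set hxb) (hg2.mono_set hxb)
  have hsplit : (∫ u in a..x, g u ^ 2) + ∫ u in x..b, g u ^ 2 = ∫ u in a..b, g u ^ 2 :=
    intervalIntegral.integral_add_adjacent_intervals
      ((intervalIntegrable_iff_integrableOn_Icc_of_le hx.1).2 (hg2.mono_set hax))
      ((intervalIntegrable_iff_integrableOn_Icc_of_le hx.2).2 (hg2.mono_set hxb))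
  have hQ₁ : 0 ≤ ∫ u in a..x, g u ^ 2 :=
    intervalIntegral.integral_nonneg hx.1 fun _ _ => sq_nonneg _
  have hQ₂ : 0 ≤ ∫ u in x..b, g u ^ 2 :=
    intervalIntegral.integral_nonneg hx.2 fun _ _ => sq_nonneg _
  set t := (x - a) / (b - a) with ht
  have ht0 : 0 ≤ t := div_nonneg (sub_nonneg.2 hx.1) (sub_nonneg.2 hab.le)
  have ht1 : t ≤ 1 := (div_le_one (sub_pos.2 hab)).2 (by linarith [hx.2])
  -- `f x - linInterp f a b x = (1 - t) (f x - f a) - t (f b - f x)`, and `y ↦ y ^ 2` is convex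
  have hconv : (f x - linInterp f a b x) ^ 2 ≤ (1 - t) * (f x - f a) ^ 2 + t * (f b - f x) ^ 2 := by
    rw [linInterp, ← ht]
    nlinarith [mul_nonneg (mul_nonneg ht0 (sub_nonneg.2 ht1)) (sq_nonneg (f b - f a))]
  have hw₁ : (1 - t) * (x - a) ≤ b - a := by nlinarith [hx.1, hx.2]
  have hw₂ : t * (b - x) ≤ b - a := by nlinarith [hx.1, hx.2]
  calc (f x - linInterp f a b x) ^ 2
      ≤ (1 - t) * (x - a) * (∫ u in a..x, g u ^ 2) + t * (b - x) * ∫ u in x..b, g u ^ 2 := by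
        nlinarith
    _ ≤ (b - a) * (∫ u in a..x, g u ^ 2) + (b - a) * ∫ u in x..b, g u ^ 2 := by
        gcongr
    _ = (b - a) * ∫ u in a..b, g u ^ 2 := by rw [← hsplit, mul_add]

theorem integral_sq_sub_linInterp_le {f g : ℝ → ℝ} {a b : ℝ} (hab : a < b)
    (hg : IntegrableOn g (Icc a b)) (hg2 : IntegrableOn (fun x => g x ^ 2) (Icc a b))
    (hf : ∀ x ∈ Icc a b, f x = f a + ∫ u in a..x, g u) :
    ∫ x in a..b, (f x - linInterp f a b x) ^ 2 ≤ (b - a) ^ 2 * ∫ u in a..b, g u ^ 2 := by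
  have hcont : ContinuousOn (fun x => (f x - linInterp f a b x) ^ 2) (Icc a b) := by
    have := continuousOn_of_eq_add_intervalIntegral hab.le hg hf
    unfold linInterp
    fun_prop
  calc ∫ x in a..b, (f x - linInterp f a b x) ^ 2
      ≤ ∫ _ in a..b, (b - a) * ∫ u in a..b, g u ^ 2 :=
        intervalIntegral.integral_mono_on hab.le (hcont.intervalIntegrable_of_Icc hab.le)
          intervalIntegrable_const fun x hx => sq_sub_linInterp_le hab hg hg2 hf hx
    _ = (b - a) ^ 2 * ∫ u in a..b, g u ^ 2 := by
        rw [intervalIntegral.integral_const, smul_eq_mul]; ring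

section FSfun

variable {j k : ℕ} {x : ℝ}

theorem two_rpow_half_mul_self (j : ℕ) : (2:ℝ) ^ ((j : ℝ) / 2) * 2 ^ ((j : ℝ) / 2) = 2 ^ j := by
  rw [← Real.rpow_add two_pos, add_halves, Real.rpow_natCast]

theorem FSfun_eq_zero_of_le_left (h : x ≤ k / 2 ^ j) : FSfun j k x = 0 := by
  have h1 : x ≤ (k + 1 / 2) / 2 ^ j := h.trans (by gcongr; linarith)
  have h2 : x ≤ (k + 1) / 2 ^ j := h.trans (by gcongr; linarith)
  simp only [FSfun, max_eq_right (sub_nonpos.2 h), max_eq_right (sub_nonpos.2 h1),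
    max_eq_right (sub_nonpos.2 h2)]
  ring

theorem FSfun_eq_zero_of_right_le (h : (k + 1) / 2 ^ j ≤ x) : FSfun j k x = 0 := by
  have h1 : (k + 1 / 2) / 2 ^ j ≤ x := le_trans (by gcongr; linarith) h
  have h2 : k / 2 ^ j ≤ x := le_trans (by gcongr; linarith) h
  simp only [FSfun, Real.rpow_add_one two_ne_zero, max_eq_left (sub_nonneg.2 h),
    max_eq_left (sub_nonneg.2 h1), max_eq_left (sub_nonneg.2 h2)]
  ring

theorem FSfun_eq_of_mem_left_half (h : x ∈ Icc (k / 2 ^ j : ℝ) ((k + 1 / 2) / 2 ^ j)) :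
    FSfun j k x = 2 ^ ((j : ℝ) / 2) * (x - k / 2 ^ j) := by
  have h2 : x ≤ (k + 1) / 2 ^ j := h.2.trans (by gcongr; linarith)
  simp only [FSfun, max_eq_left (sub_nonneg.2 h.1), max_eq_right (sub_nonpos.2 h.2),
    max_eq_right (sub_nonpos.2 h2)]
  ring

theorem FSfun_eq_of_mem_right_half (h : x ∈ Icc ((k + 1 / 2) / 2 ^ j : ℝ) ((k + 1) / 2 ^ j)) :
    FSfun j k x = 2 ^ ((j : ℝ) / 2) * ((k + 1) / 2 ^ j - x) := by
  have h0 : k / 2 ^ j ≤ x := le_trans (by gcongr; linarith) h.1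
  simp only [FSfun, Real.rpow_add_one two_ne_zero, max_eq_left (sub_nonneg.2 h0),
    max_eq_left (sub_nonneg.2 h.1), max_eq_right (sub_nonpos.2 h.2)]
  ring

theorem continuous_FSfun (j k : ℕ) : Continuous (FSfun j k) := by
  unfold FSfun; fun_prop

end FSfun

noncomputable def schauderCoeff (f : ℝ → ℝ) (j k : ℕ) : ℝ :=
  -(2:ℝ) ^ ((j : ℝ) / 2) *
    (f (((k : ℝ) + 1) / 2 ^ j) - 2 * f (((k : ℝ) + 1 / 2) / 2 ^ j) + f ((k : ℝ) / 2 ^ j))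

/-- Levels `j < n`: the `S J` of the main theorem is `schauderPartialSum f (J + 1)`. -/
noncomputable def schauderPartialSum (f : ℝ → ℝ) (n : ℕ) (x : ℝ) : ℝ :=
  f 0 + (f 1 - f 0) * x +
    ∑ j ∈ Finset.range n, ∑ k ∈ Finset.range (2 ^ j), schauderCoeff f j k * FSfun j k x

theorem sum_mul_FSfun_eq_single (c : ℕ → ℝ) {n k : ℕ} (hk : k < 2 ^ n) {x : ℝ}
    (hx : x ∈ Icc (k / 2 ^ n : ℝ) ((k + 1) / 2 ^ n)) :
    ∑ i ∈ Finset.range (2 ^ n), c i * FSfun n i x = c k * FSfun n k x := by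
  refine Finset.sum_eq_single_of_mem k (Finset.mem_range.2 hk) fun i _ hik => ?_
  rcases hik.lt_or_gt with hlt | hgt
  · rw [FSfun_eq_zero_of_right_le (le_trans ?_ hx.1), mul_zero]
    gcongr
    exact_mod_cast hlt
  · rw [FSfun_eq_zero_of_le_left (hx.2.trans ?_), mul_zero]
    gcongr
    exact_mod_cast hgt

theorem linInterp_add_schauderCoeff_mul_FSfun_of_mem_left_half (f : ℝ → ℝ) {n k : ℕ} {x : ℝ}
    (hx : x ∈ Icc (k / 2 ^ n : ℝ) ((k + 1 / 2) / 2 ^ n)) :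
    linInterp f (k / 2 ^ n) ((k + 1) / 2 ^ n) x + schauderCoeff f n k * FSfun n k x =
      linInterp f (k / 2 ^ n) ((k + 1 / 2) / 2 ^ n) x := by
  rw [FSfun_eq_of_mem_left_half hx, linInterp, linInterp, schauderCoeff]
  generalize f (k / 2 ^ n) = fa, f ((k + 1 / 2) / 2 ^ n) = fm, f ((k + 1) / 2 ^ n) = fb
  -- with `2 ^ n = s * s`, `s = 2 ^ (n / 2)`, this is an identity of rational functions of `s`
  rw [← two_rpow_half_mul_self n]
  field_simp
  ring

theorem linInterp_add_schauderCoeff_mul_FSfun_of_mem_right_half (f : ℝ → ℝ) {n k : ℕ} {x : ℝ}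
    (hx : x ∈ Icc ((k + 1 / 2) / 2 ^ n : ℝ) ((k + 1) / 2 ^ n)) :
    linInterp f (k / 2 ^ n) ((k + 1) / 2 ^ n) x + schauderCoeff f n k * FSfun n k x =
      linInterp f ((k + 1 / 2) / 2 ^ n) ((k + 1) / 2 ^ n) x := by
  rw [FSfun_eq_of_mem_right_half hx, linInterp, linInterp, schauderCoeff]
  generalize f (k / 2 ^ n) = fa, f ((k + 1 / 2) / 2 ^ n) = fm, f ((k + 1) / 2 ^ n) = fb
  rw [← two_rpow_half_mul_self n]
  field_simp
  ring

theorem schauderPartialSum_succ (f : ℝ → ℝ) (n : ℕ) (x : ℝ) :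
    schauderPartialSum f (n + 1) x =
      schauderPartialSum f n x + ∑ k ∈ Finset.range (2 ^ n), schauderCoeff f n k * FSfun n k x := by
  rw [schauderPartialSum, schauderPartialSum, Finset.sum_range_succ, ← add_assoc]

theorem schauderPartialSum_eq_linInterp (f : ℝ → ℝ) {n k : ℕ} (hk : k < 2 ^ n) {x : ℝ}
    (hx : x ∈ Icc (k / 2 ^ n : ℝ) ((k + 1) / 2 ^ n)) :
    schauderPartialSum f n x = linInterp f (k / 2 ^ n) ((k + 1) / 2 ^ n) x := by
  induction n generalizing k with
  | zero =>
    obtain rfl : k = 0 := by simpa using hk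
    simp [schauderPartialSum, linInterp, mul_comm]
  | succ n ih =>
    obtain ⟨k, hk2⟩ := Nat.even_or_odd' k
    have hk' : k < 2 ^ n := by rw [pow_succ] at hk; omega
    rcases hk2 with rfl | rfl
    · have hleft : ((2 * k : ℕ) : ℝ) / 2 ^ (n + 1) = k / 2 ^ n := by
        push_cast; field_simp; ring
      have hmid : (((2 * k : ℕ) : ℝ) + 1) / 2 ^ (n + 1) = (k + 1 / 2) / 2 ^ n := by
        push_cast; field_simp; ring
      rw [hleft, hmid] at hx ⊢
      have hx' : x ∈ Icc (k / 2 ^ n : ℝ) ((k + 1) / 2 ^ n) :=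
        ⟨hx.1, hx.2.trans (by gcongr; norm_num)⟩
      rw [schauderPartialSum_succ, ih hk' hx', sum_mul_FSfun_eq_single _ hk' hx',
        linInterp_add_schauderCoeff_mul_FSfun_of_mem_left_half f hx]
    · have hmid : ((2 * k + 1 : ℕ) : ℝ) / 2 ^ (n + 1) = (k + 1 / 2) / 2 ^ n := by
        push_cast; field_simp; ring
      have hright : (((2 * k + 1 : ℕ) : ℝ) + 1) / 2 ^ (n + 1) = (k + 1) / 2 ^ n := by
        push_cast; field_simp; ring
      rw [hmid, hright] at hx ⊢
      have hx' : x ∈ Icc (k / 2 ^ n : ℝ) ((k + 1) / 2 ^ n) :=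
        ⟨le_trans (by gcongr; norm_num) hx.1, hx.2⟩
      rw [schauderPartialSum_succ, ih hk' hx', sum_mul_FSfun_eq_single _ hk' hx',
        linInterp_add_schauderCoeff_mul_FSfun_of_mem_right_half f hx]

theorem dyadic_Icc_subset_unitInterval {n k : ℕ} (hk : k < 2 ^ n) :
    Icc (k / 2 ^ n : ℝ) ((k + 1) / 2 ^ n) ⊆ Icc 0 1 := by
  have hk' : (k : ℝ) + 1 ≤ 2 ^ n := by exact_mod_cast hk
  exact Icc_subset_Icc (by positivity) ((div_le_one (by positivity)).2 hk')

theorem continuous_schauderPartialSum (f : ℝ → ℝ) (n : ℕ) :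
    Continuous (schauderPartialSum f n) := by
  have := continuous_FSfun
  unfold schauderPartialSum
  fun_prop

theorem integral_sq_sub_schauderPartialSum_le_of_lt {f g : ℝ → ℝ}
    (hg : IntegrableOn g (Icc 0 1)) (hg2 : IntegrableOn (fun x => g x ^ 2) (Icc 0 1))
    (hf : ∀ x ∈ Icc (0:ℝ) 1, f x = f 0 + ∫ u in (0:ℝ)..x, g u) {n k : ℕ} (hk : k < 2 ^ n) :
    ∫ x in (k / 2 ^ n : ℝ)..((k + 1) / 2 ^ n), (f x - schauderPartialSum f n x) ^ 2 ≤
      (4 ^ n)⁻¹ * ∫ u in (k / 2 ^ n : ℝ)..((k + 1) / 2 ^ n), g u ^ 2 := by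
  have hcell := dyadic_Icc_subset_unitInterval hk
  have hlt : (k / 2 ^ n : ℝ) < (k + 1) / 2 ^ n := by gcongr; linarith
  calc ∫ x in (k / 2 ^ n : ℝ)..((k + 1) / 2 ^ n), (f x - schauderPartialSum f n x) ^ 2
      = ∫ x in (k / 2 ^ n : ℝ)..((k + 1) / 2 ^ n),
          (f x - linInterp f (k / 2 ^ n) ((k + 1) / 2 ^ n) x) ^ 2 := by
        refine intervalIntegral.integral_congr fun x hx => ?_
        rw [uIcc_of_le hlt.le] at hx
        rw [schauderPartialSum_eq_linInterp f hk hx]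
    _ ≤ ((k + 1) / 2 ^ n - k / 2 ^ n) ^ 2 * ∫ u in (k / 2 ^ n : ℝ)..((k + 1) / 2 ^ n), g u ^ 2 :=
        integral_sq_sub_linInterp_le hlt (hg.mono_set hcell) (hg2.mono_set hcell)
          (eq_add_intervalIntegral_of_Icc_subset hg hf hcell)
    _ = (4 ^ n)⁻¹ * ∫ u in (k / 2 ^ n : ℝ)..((k + 1) / 2 ^ n), g u ^ 2 := by
        rw [← sub_div, add_sub_cancel_left, div_pow, one_pow, ← pow_mul, mul_comm n 2, pow_mul]
        norm_num

theorem integral_sq_sub_schauderPartialSum_le {f g : ℝ → ℝ}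
    (hg : MemLp g 2 (volume.restrict (Icc 0 1)))
    (hf : ∀ x ∈ Icc (0:ℝ) 1, f x = f 0 + ∫ u in (0:ℝ)..x, g u) (n : ℕ) :
    ∫ x in (0:ℝ)..1, (f x - schauderPartialSum f n x) ^ 2 ≤
      (4 ^ n)⁻¹ * ∫ u in (0:ℝ)..1, g u ^ 2 := by
  have hgi : IntegrableOn g (Icc 0 1) := hg.integrable one_le_two
  have hg2i : IntegrableOn (fun x => g x ^ 2) (Icc 0 1) := hg.integrable_sq
  have herr : IntervalIntegrable (fun x => (f x - schauderPartialSum f n x) ^ 2) volume 0 1 :=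
    ((continuousOn_of_eq_add_intervalIntegral zero_le_one hgi hf).sub
      (continuous_schauderPartialSum f n).continuousOn).pow 2 |>.intervalIntegrable_of_Icc
      zero_le_one
  have hg2 : IntervalIntegrable (fun x => g x ^ 2) volume 0 1 :=
    (intervalIntegrable_iff_integrableOn_Icc_of_le zero_le_one).2 hg2i
  set a : ℕ → ℝ := fun k => k / 2 ^ n with ha
  have ha_succ (k : ℕ) : a (k + 1) = (k + 1) / 2 ^ n := by simp [ha]
  have hcell (k : ℕ) (hk : k < 2 ^ n) : uIcc (a k) (a (k + 1)) ⊆ uIcc 0 1 := by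
    have hle : a k ≤ a (k + 1) := by
      rw [ha_succ]; exact div_le_div_of_nonneg_right (by linarith) (by positivity)
    rw [uIcc_of_le hle, uIcc_of_le zero_le_one, ha_succ]
    exact dyadic_Icc_subset_unitInterval hk
  have ha0 : a 0 = 0 := by simp [ha]
  have ha1 : a (2 ^ n) = 1 := by simp [ha]
  calc ∫ x in (0:ℝ)..1, (f x - schauderPartialSum f n x) ^ 2
      = ∑ k ∈ Finset.range (2 ^ n),
          ∫ x in a k..a (k + 1), (f x - schauderPartialSum f n x) ^ 2 := by
        rw [intervalIntegral.sum_integral_adjacent_intervals fun k hk => herr.mono_set (hcell k hk),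
          ha0, ha1]
    _ ≤ ∑ k ∈ Finset.range (2 ^ n), (4 ^ n)⁻¹ * ∫ u in a k..a (k + 1), g u ^ 2 :=
        Finset.sum_le_sum fun k hk => by
          rw [ha_succ]
          exact integral_sq_sub_schauderPartialSum_le_of_lt hgi hg2i hf (Finset.mem_range.1 hk)
    _ = (4 ^ n)⁻¹ * ∫ u in (0:ℝ)..1, g u ^ 2 := by
        rw [← Finset.mul_sum, intervalIntegral.sum_integral_adjacent_intervals
          fun k hk => hg2.mono_set (hcell k hk), ha0, ha1]

/-- Faber–Schauder expansion: for absolutely continuous `f` with `f' ∈ L²[0,1]`,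
the partial sums `f(0) + (f(1)-f(0))x + ∑_{j≤J}∑_k d_{j,k} Ψ_{j,k}(x)` with
`d_{j,k} = -2^{j/2}(f((k+1)/2^j) - 2 f((k+1/2)/2^j) + f(k/2^j))` converge to `f`
in `L²[0,1]`. -/
theorem faber_schauder_expansion_L2 (f g : ℝ → ℝ)
    (hg : MemLp g 2 (volume.restrict (Set.Icc (0:ℝ) 1)))
    (hf : ∀ x ∈ Set.Icc (0:ℝ) 1, f x = f 0 + ∫ u in (0:ℝ)..x, g u)
    (d : ℕ → ℕ → ℝ)
    (hd : ∀ j k : ℕ, k < 2 ^ j →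
      d j k = -(2:ℝ) ^ ((j : ℝ) / 2) *
        (f (((k : ℝ) + 1) / 2 ^ j) - 2 * f (((k : ℝ) + 1 / 2) / 2 ^ j)
          + f ((k : ℝ) / 2 ^ j)))
    (S : ℕ → ℝ → ℝ)
    (hS : ∀ J x, S J x = f 0 + (f 1 - f 0) * x +
      ∑ j ∈ Finset.range (J + 1), ∑ k ∈ Finset.range (2 ^ j), d j k * FSfun j k x) :
    Tendsto (fun J => ∫ x in (0:ℝ)..1, (f x - S J x) ^ 2) atTop (nhds 0) := by
  have hS' (J : ℕ) (x : ℝ) : S J x = schauderPartialSum f (J + 1) x := by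
    rw [hS, schauderPartialSum]
    congr 1
    refine Finset.sum_congr rfl fun j _ => Finset.sum_congr rfl fun k hk => ?_
    rw [hd j k (Finset.mem_range.1 hk), schauderCoeff]
  have hrate : Tendsto (fun J : ℕ => (4 ^ (J + 1) : ℝ)⁻¹ * ∫ u in (0:ℝ)..1, g u ^ 2)
      atTop (nhds 0) := by
    have h4 := (tendsto_inv_atTop_zero.comp (tendsto_pow_atTop_atTop_of_one_lt
      (by norm_num : (1:ℝ) < 4))).comp (tendsto_add_atTop_nat 1)
    simpa using h4.mul_const (∫ u in (0:ℝ)..1, g u ^ 2)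
  refine squeeze_zero (fun J => intervalIntegral.integral_nonneg zero_le_one fun _ _ => sq_nonneg _)
    (fun J => ?_) hrate
  simp only [hS']
  exact integral_sq_sub_schauderPartialSum_le hg hf (J + 1)
end

section
/- Every function in the truncated Faber–Schauder class $\mathcal{F}_{FS}(M,C)$ on $[0,1]^d$ belongs to the MARS function class $\mathcal{F}_{MARS}(3^d I, 2^{d(M+2)/2} C)$, where $I = (1+2^M)^d$. That is, any tensor product $\beta_{\boldsymbol\lambda}\Psi_{\lambda_1}(x_1)\cdots\Psi_{\lambda_d}(x_d)$ with $|\beta_{\boldsymbol\lambda}| \le C$ can be written as a linear combination of at most $3^d$ MARS basis functions with coefficients bounded in absolute value by $2^{d(M+2)/2}C$ (provided all resolution levels are at most $M$). -/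
/-- A member of the univariate Faber–Schauder system truncated at level `M`:
the constant `1`, the identity `x`, or a triangular function `Ψ_{j,k}` with `j ≤ M`. -/
def IsFSFun (M : ℕ) (ψ : ℝ → ℝ) : Prop :=
  (∀ x, ψ x = 1) ∨ (∀ x, ψ x = x) ∨
    ∃ j k : ℕ, j ≤ M ∧ k < 2 ^ j ∧ ∀ x, ψ x = FSfun j k x

/-- A MARS basis function on `[0,1]^d`: `x ↦ ∏_{j ∈ S} (s_j(x_j - t_j))_+`. -/
def IsMARSBasis (d : ℕ) (h : (Fin d → ℝ) → ℝ) : Prop :=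
  ∃ (S : Finset (Fin d)) (s t : Fin d → ℝ),
    (∀ j, s j = 1 ∨ s j = -1) ∧ (∀ j, t j ∈ Set.Icc (0:ℝ) 1) ∧
    ∀ x, h x = ∏ j ∈ S, max (s j * (x j - t j)) 0

open Finset

/-- The univariate factor of a MARS basis function: `none` encodes a coordinate outside `S`. -/
def marsFactor : Option ℝ → ℝ → ℝ
  | none, _ => 1
  | some t, x => max (x - t) 0

@[simp] lemma marsFactor_none (x : ℝ) : marsFactor none x = 1 := rfl

@[simp] lemma marsFactor_some (t x : ℝ) : marsFactor (some t) x = max (x - t) 0 := rfl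

lemma isMARSBasis_prod_marsFactor {d : ℕ} (a : Fin d → Option ℝ)
    (ha : ∀ l, ∀ t ∈ a l, t ∈ Set.Icc (0:ℝ) 1) :
    IsMARSBasis d fun x => ∏ l, marsFactor (a l) (x l) := by
  refine ⟨univ.filter fun l => (a l).isSome, fun _ => 1, fun l => (a l).getD 0,
    fun _ => Or.inl rfl, fun l => ?_, fun x => ?_⟩
  · dsimp only
    cases h : a l with
    | none => simp
    | some t => exact ha l t h
  · rw [prod_filter]
    refine prod_congr rfl fun l _ => ?_
    dsimp only
    cases a l <;> simp

lemma one_le_two_rpow_level (M : ℕ) : (1:ℝ) ≤ 2 ^ (((M:ℝ) + 2) / 2) :=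
  Real.one_le_rpow one_le_two (by positivity)

lemma FSfun_eq_sum_marsFactor (j k : ℕ) (x : ℝ) :
    FSfun j k x = ∑ i : Fin 3,
      ![(2:ℝ) ^ ((j:ℝ) / 2), -(2:ℝ) ^ ((j:ℝ) / 2 + 1), (2:ℝ) ^ ((j:ℝ) / 2)] i *
        marsFactor (![some ((k:ℝ) / 2 ^ j), some (((k:ℝ) + 1 / 2) / 2 ^ j),
          some (((k:ℝ) + 1) / 2 ^ j)] i) x := by
  simp only [FSfun, Fin.sum_univ_three, Matrix.cons_val, marsFactor_some]
  ring

lemma IsFSFun.exists_sum_marsFactor {M : ℕ} {ψ : ℝ → ℝ} (hψ : IsFSFun M ψ) :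
    ∃ (c : Fin 3 → ℝ) (a : Fin 3 → Option ℝ),
      (∀ i, |c i| ≤ 2 ^ (((M:ℝ) + 2) / 2)) ∧ (∀ i, ∀ t ∈ a i, t ∈ Set.Icc (0:ℝ) 1) ∧
      ∀ x ∈ Set.Icc (0:ℝ) 1, ψ x = ∑ i, c i * marsFactor (a i) x := by
  have hbound : ∀ i, |![(1:ℝ), 0, 0] i| ≤ 2 ^ (((M:ℝ) + 2) / 2) := fun i => by
    fin_cases i <;> simp [one_le_two_rpow_level, Real.rpow_nonneg]
  rcases hψ with hone | hid | ⟨j, k, hjM, hk, hFS⟩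
  · refine ⟨![1, 0, 0], fun _ => none, hbound, by simp, fun x _ => ?_⟩
    simp [hone, Fin.sum_univ_three]
  · refine ⟨![1, 0, 0], fun _ => some 0, hbound, by simp, fun x hx => ?_⟩
    simp [hid, Fin.sum_univ_three, hx.1]
  · refine ⟨_, _, fun i => ?_, fun i t ht => ?_, fun x _ => (hFS x).trans (FSfun_eq_sum_marsFactor j k x)⟩
    · have hjM : (j:ℝ) ≤ M := by exact_mod_cast hjM
      fin_cases i <;> simp [abs_of_nonneg, Real.rpow_nonneg] <;> linarith
    · have hpos : (0:ℝ) < 2 ^ j := by positivity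
      have hk : (k:ℝ) + 1 ≤ 2 ^ j := by exact_mod_cast hk
      fin_cases i <;> simp at ht <;> rw [← ht] <;> exact ⟨by positivity, (div_le_one hpos).2 (by linarith)⟩

lemma abs_mul_prod_le {ι : Type*} (s : Finset ι) {β C K : ℝ} {c : ι → ℝ} (hβ : |β| ≤ C)
    (hc : ∀ l ∈ s, |c l| ≤ K) : |β * ∏ l ∈ s, c l| ≤ K ^ s.card * C := by
  have hprod : ∏ l ∈ s, |c l| ≤ K ^ s.card :=
    (prod_le_prod (fun l _ => abs_nonneg (c l)) hc).trans_eq (prod_const K)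
  rw [abs_mul, abs_prod, mul_comm]
  exact mul_le_mul hprod hβ (abs_nonneg β) ((prod_nonneg fun l _ => abs_nonneg (c l)).trans hprod)

/-- Any tensor product `β Ψ_{λ₁}(x₁)⋯Ψ_{λ_d}(x_d)` of truncated Faber–Schauder
functions with `|β| ≤ C` is a linear combination of at most `3^d` MARS basis
functions with coefficients bounded by `2^{d(M+2)/2} C`; hence
`𝓕_FS(M,C) ⊆ 𝓕_MARS(3^d I, 2^{d(M+2)/2} C)`. -/
theorem faber_schauder_subset_mars (d M : ℕ) (C β : ℝ) (hβ : |β| ≤ C)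
    (ψ : Fin d → ℝ → ℝ) (hψ : ∀ l, IsFSFun M (ψ l)) :
    ∃ (n : ℕ), n ≤ 3 ^ d ∧
      ∃ (β' : Fin n → ℝ) (h : Fin n → (Fin d → ℝ) → ℝ),
        (∀ m, |β' m| ≤ (2:ℝ) ^ ((d : ℝ) * ((M : ℝ) + 2) / 2) * C ∧ IsMARSBasis d (h m)) ∧
        ∀ x : Fin d → ℝ, (∀ i, x i ∈ Set.Icc (0:ℝ) 1) →
          β * ∏ l, ψ l (x l) = ∑ m, β' m * h m x := by
  choose c a hc ha hψx using fun l => (hψ l).exists_sum_marsFactor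
  let e : Fin (3 ^ d) ≃ (Fin d → Fin 3) := (Fintype.equivFinOfCardEq (by simp)).symm
  have hpow : ((2:ℝ) ^ (((M:ℝ) + 2) / 2)) ^ d = 2 ^ ((d:ℝ) * ((M:ℝ) + 2) / 2) := by
    rw [← Real.rpow_natCast, ← Real.rpow_mul zero_le_two, mul_comm, mul_div_assoc]
  refine ⟨3 ^ d, le_rfl, fun m => β * ∏ l, c l (e m l),
    fun m x => ∏ l, marsFactor (a l (e m l)) (x l),
    fun m => ⟨?_, isMARSBasis_prod_marsFactor _ fun l => ha l _⟩, fun x hx => ?_⟩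
  · simpa [hpow] using abs_mul_prod_le univ hβ fun l _ => hc l (e m l)
  · calc β * ∏ l, ψ l (x l) = β * ∏ l, ∑ i, c l i * marsFactor (a l i) (x l) := by
          simp only [fun l => hψx l (x l) (hx l)]
      _ = ∑ f : Fin d → Fin 3, β * ∏ l, c l (f l) * marsFactor (a l (f l)) (x l) := by
          rw [Fintype.prod_sum, mul_sum]
      _ = ∑ m, (β * ∏ l, c l (e m l)) * ∏ l, marsFactor (a l (e m l)) (x l) := by
          rw [← e.sum_comp]
          simp only [prod_mul_distrib, mul_assoc]
end

section
/- Let $f(x_1,x_2) = (x_1+x_2-1)_+$ on $[0,1]^2$. For any function $h$ in the bivariate MARS class with at most $M$ basis functions, $\sup_{(x_1,x_2)\in[0,1]^2} |f(x_1,x_2) - h(x_1,x_2)| \ge 1/(8(M+1))$. -/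
/-- Affine behavior of a single hinge factor on an interval avoiding its knot. -/
lemma mars_aux_hinge (s t u v : ℝ) (hs : s = 1 ∨ s = -1) (huv : u < v)
    (ht : t ≤ u ∨ v ≤ t) :
    max (s * (u - t)) 0 + max (s * (v - t)) 0 = 2 * max (s * ((u + v) / 2 - t)) 0 := by
  rcases hs with hs | hs <;> subst hs <;> rcases ht with ht | ht
  · rw [max_eq_left (by linarith), max_eq_left (by linarith), max_eq_left (by linarith)]; ring
  · rw [max_eq_right (by linarith), max_eq_right (by linarith), max_eq_right (by linarith)]; ring
  · rw [max_eq_right (by linarith), max_eq_right (by linarith), max_eq_right (by linarith)]; ring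
  · rw [max_eq_left (by linarith), max_eq_left (by linarith), max_eq_left (by linarith)]; ring

theorem mars_bivariate_hinge_approx_lower_bound (M : ℕ)
    (β₀ : ℝ) (β s₁ s₂ t₁ t₂ : Fin M → ℝ) (c₁ c₂ : Fin M → Bool)
    (hs₁ : ∀ m, s₁ m = 1 ∨ s₁ m = -1) (hs₂ : ∀ m, s₂ m = 1 ∨ s₂ m = -1)
    (ht₁ : ∀ m, t₁ m ∈ Set.Icc (0:ℝ) 1) (ht₂ : ∀ m, t₂ m ∈ Set.Icc (0:ℝ) 1)
    (h : ℝ → ℝ → ℝ)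
    (hh : ∀ x₁ x₂, h x₁ x₂ = β₀ + ∑ m, β m *
      (if c₁ m then max (s₁ m * (x₁ - t₁ m)) 0 else 1) *
      (if c₂ m then max (s₂ m * (x₂ - t₂ m)) 0 else 1)) :
    1 / (8 * ((M : ℝ) + 1)) ≤
      ⨆ x₁ : Set.Icc (0:ℝ) 1, ⨆ x₂ : Set.Icc (0:ℝ) 1,
        |max ((x₁ : ℝ) + (x₂ : ℝ) - 1) 0 - h x₁ x₂| := by
  have hN : (0:ℝ) < (M:ℝ) + 1 := by positivity
  -- Pigeonhole: a knot-free open interval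
  obtain ⟨k, hkM, hfree⟩ : ∃ k : ℕ, k ≤ M ∧
      ∀ m, t₁ m ∉ Set.Ioo ((k:ℝ)/((M:ℝ)+1)) (((k:ℝ)+1)/((M:ℝ)+1)) := by
    by_contra hcon
    push_neg at hcon
    have hc' : ∀ kk : Fin (M+1), ∃ m, t₁ m ∈
        Set.Ioo ((kk.val:ℝ)/((M:ℝ)+1)) (((kk.val:ℝ)+1)/((M:ℝ)+1)) :=
      fun kk => hcon kk.val (Nat.lt_succ_iff.mp kk.isLt)
    choose f hf using hc'
    obtain ⟨a, b, hab, hfab⟩ := Fintype.exists_ne_map_eq_of_card_lt f (by simp)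
    have h1 := hf a
    have h2 := hf b
    rw [hfab] at h1
    rw [Set.mem_Ioo] at h1 h2
    have hab1 : (a.val:ℝ) < (b.val:ℝ) + 1 := by
      have hlt := lt_trans h1.1 h2.2
      rw [div_lt_div_iff₀ hN hN] at hlt
      exact lt_of_mul_lt_mul_right hlt (le_of_lt hN)
    have hab2 : (b.val:ℝ) < (a.val:ℝ) + 1 := by
      have hlt := lt_trans h2.1 h1.2
      rw [div_lt_div_iff₀ hN hN] at hlt
      exact lt_of_mul_lt_mul_right hlt (le_of_lt hN)
    have hab1' : a.val < b.val + 1 := by exact_mod_cast hab1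
    have hab2' : b.val < a.val + 1 := by exact_mod_cast hab2
    exact hab (Fin.ext (by omega))
  set N : ℝ := (M:ℝ) + 1 with hNdef
  set u : ℝ := (k:ℝ) / N with hudef
  set v : ℝ := ((k:ℝ) + 1) / N with hvdef
  set a : ℝ := (u + v) / 2 with hadef
  set x2 : ℝ := 1 - a with hx2def
  have hkN : (k:ℝ) + 1 ≤ N := by
    have : (k:ℝ) ≤ (M:ℝ) := by exact_mod_cast hkM
    rw [hNdef]; linarith
  have huv : u < v := by
    rw [hudef, hvdef, div_lt_div_iff₀ hN hN]
    nlinarith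
  have hu0 : 0 ≤ u := by positivity
  have hv1 : v ≤ 1 := by
    rw [hvdef, div_le_one hN]; exact hkN
  have hu1 : u ≤ 1 := by linarith
  have hv0 : 0 ≤ v := by linarith
  have ha0 : 0 ≤ a := by rw [hadef]; linarith
  have ha1 : a ≤ 1 := by rw [hadef]; linarith
  have hau : u < a := by rw [hadef]; linarith
  have hav : a < v := by rw [hadef]; linarith
  have hx20 : 0 ≤ x2 := by rw [hx2def]; linarith
  have hx21 : x2 ≤ 1 := by rw [hx2def]; linarith
  -- Key affine identity
  have hkey : h u x2 + h v x2 = 2 * h a x2 := by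
    rw [hh u x2, hh v x2, hh a x2]
    have hsum : ∑ m, β m *
        (if c₁ m then max (s₁ m * (u - t₁ m)) 0 else 1) *
        (if c₂ m then max (s₂ m * (x2 - t₂ m)) 0 else 1)
      + ∑ m, β m *
        (if c₁ m then max (s₁ m * (v - t₁ m)) 0 else 1) *
        (if c₂ m then max (s₂ m * (x2 - t₂ m)) 0 else 1)
      = 2 * ∑ m, β m *
        (if c₁ m then max (s₁ m * (a - t₁ m)) 0 else 1) *
        (if c₂ m then max (s₂ m * (x2 - t₂ m)) 0 else 1) := by
      rw [Finset.mul_sum, ← Finset.sum_add_distrib]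
      refine Finset.sum_congr rfl fun m _ => ?_
      have hterm : (if c₁ m then max (s₁ m * (u - t₁ m)) 0 else 1)
          + (if c₁ m then max (s₁ m * (v - t₁ m)) 0 else 1)
          = 2 * (if c₁ m then max (s₁ m * (a - t₁ m)) 0 else 1) := by
        by_cases hc : c₁ m
        · simp only [hc, if_true]
          have hnot := hfree m
          rw [Set.mem_Ioo] at hnot
          push_neg at hnot
          have ht : t₁ m ≤ u ∨ v ≤ t₁ m := by
            rcases le_or_gt (t₁ m) u with hle | hgt
            · exact Or.inl hle
            · exact Or.inr (hnot hgt)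
          rw [hadef]
          exact mars_aux_hinge (s₁ m) (t₁ m) u v (hs₁ m) huv ht
        · simp only [hc, if_false]; norm_num
      linear_combination (β m * (if c₂ m then max (s₂ m * (x2 - t₂ m)) 0 else 1)) * hterm
    linarith
  -- Boundedness via continuity on compact square
  have hcontG : Continuous fun p : ℝ × ℝ => |max (p.1 + p.2 - 1) 0 - h p.1 p.2| := by
    have hh' : (fun p : ℝ × ℝ => h p.1 p.2) = fun p : ℝ × ℝ => β₀ + ∑ m, β m *
        (if c₁ m then max (s₁ m * (p.1 - t₁ m)) 0 else 1) *
        (if c₂ m then max (s₂ m * (p.2 - t₂ m)) 0 else 1) := funext fun p => hh p.1 p.2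
    apply Continuous.abs
    apply Continuous.sub
    · fun_prop
    · rw [hh']
      apply Continuous.add continuous_const
      apply continuous_finset_sum
      intro m _
      cases hc1 : c₁ m <;> cases hc2 : c₂ m <;> simp [hc1, hc2] <;> fun_prop
  have hK : IsCompact ((Set.Icc (0:ℝ) 1) ×ˢ (Set.Icc (0:ℝ) 1)) :=
    isCompact_Icc.prod isCompact_Icc
  obtain ⟨C, hC⟩ := hK.exists_bound_of_continuousOn hcontG.continuousOn
  have hC' : ∀ x₁ ∈ Set.Icc (0:ℝ) 1, ∀ x₂ ∈ Set.Icc (0:ℝ) 1,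
      |max (x₁ + x₂ - 1) 0 - h x₁ x₂| ≤ C := by
    intro x₁ h1 x₂ h2
    have := hC (x₁, x₂) (Set.mem_prod.mpr ⟨h1, h2⟩)
    simpa [Real.norm_eq_abs, abs_abs] using this
  haveI : Nonempty ↥(Set.Icc (0:ℝ) 1) := ⟨⟨0, Set.left_mem_Icc.mpr zero_le_one⟩⟩
  -- every value is below the double sup
  have key : ∀ x₁, x₁ ∈ Set.Icc (0:ℝ) 1 → ∀ x₂, x₂ ∈ Set.Icc (0:ℝ) 1 →
      |max (x₁ + x₂ - 1) 0 - h x₁ x₂| ≤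
      ⨆ y₁ : Set.Icc (0:ℝ) 1, ⨆ y₂ : Set.Icc (0:ℝ) 1,
        |max ((y₁ : ℝ) + (y₂ : ℝ) - 1) 0 - h y₁ y₂| := by
    intro x₁ hx₁ x₂ hx₂
    have hbdd₁ : BddAbove (Set.range fun y₂ : Set.Icc (0:ℝ) 1 =>
        |max (x₁ + (y₂ : ℝ) - 1) 0 - h x₁ y₂|) := by
      refine ⟨C, ?_⟩
      rintro _ ⟨y₂, rfl⟩
      exact hC' x₁ hx₁ y₂ y₂.2
    have hbdd₂ : BddAbove (Set.range fun y₁ : Set.Icc (0:ℝ) 1 =>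
        ⨆ y₂ : Set.Icc (0:ℝ) 1, |max ((y₁ : ℝ) + (y₂ : ℝ) - 1) 0 - h y₁ y₂|) := by
      refine ⟨C, ?_⟩
      rintro _ ⟨y₁, rfl⟩
      exact ciSup_le fun y₂ => hC' y₁ y₁.2 y₂ y₂.2
    calc |max (x₁ + x₂ - 1) 0 - h x₁ x₂|
        ≤ ⨆ y₂ : Set.Icc (0:ℝ) 1, |max (x₁ + (y₂ : ℝ) - 1) 0 - h x₁ y₂| :=
          le_ciSup hbdd₁ ⟨x₂, hx₂⟩
      _ ≤ _ := le_ciSup hbdd₂ ⟨x₁, hx₁⟩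
  have e1 := key u ⟨hu0, hu1⟩ x2 ⟨hx20, hx21⟩
  have e2 := key a ⟨ha0, ha1⟩ x2 ⟨hx20, hx21⟩
  have e3 := key v ⟨hv0, hv1⟩ x2 ⟨hx20, hx21⟩
  have hfu : max (u + x2 - 1) 0 = 0 := max_eq_right (by rw [hx2def]; linarith)
  have hfa : max (a + x2 - 1) 0 = 0 := max_eq_right (by rw [hx2def]; linarith)
  have hfv : max (v + x2 - 1) 0 = v - a := by
    rw [max_eq_left (by rw [hx2def]; linarith), hx2def]; ring
  rw [hfu] at e1
  rw [hfa] at e2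
  rw [hfv] at e3
  have hva : v - a = 1 / (2 * N) := by
    rw [hadef, hudef, hvdef]
    field_simp
    ring
  rw [hva] at e3
  have a1 := abs_le.mp e1
  have a2 := abs_le.mp e2
  have a3 := abs_le.mp e3
  have hN0 : N ≠ 0 := ne_of_gt hN
  have hfin : 1 / (2 * N) = 4 * (1 / (8 * N)) := by
    field_simp
    ring
  linarith [a1.1, a1.2, a2.1, a2.2, a3.1, a3.2, hkey, hfin]
end

section
/- Let $g:[a,b] \to \mathbb{R}$ be affine and let $c = (a+b)/2$. If $f(x) = (x-c)_+$, then $\sup_{x \in [a,b]} |g(x) - f(x)| \ge (b-a)/8$. -/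
theorem affine_hinge_approx_lower_bound (a b : ℝ) (ha : 0 ≤ a) (hab : a < b)
    (g : ℝ → ℝ) (α β : ℝ) (hg : ∀ x ∈ Set.Icc a b, g x = α * x + β) :
    (b - a) / 8 ≤ ⨆ x : Set.Icc a b, |g x - max ((x : ℝ) - (a + b) / 2) 0| := by
  set c : ℝ := (a + b) / 2 with hc
  have hac : a ≤ c := by simp [hc]; linarith
  have hcb : c ≤ b := by simp [hc]; linarith
  have hma : a ∈ Set.Icc a b := ⟨le_refl a, hab.le⟩
  have hmc : c ∈ Set.Icc a b := ⟨hac, hcb⟩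
  have hmb : b ∈ Set.Icc a b := ⟨hab.le, le_refl b⟩
  -- boundedness
  have hbdd : BddAbove (Set.range fun x : Set.Icc a b =>
      |g x - max ((x : ℝ) - (a + b) / 2) 0|) := by
    have hcont : ContinuousOn (fun x : ℝ => |α * x + β - max (x - (a + b) / 2) 0|)
        (Set.Icc a b) := by fun_prop
    have hcomp := (isCompact_Icc.image_of_continuousOn hcont).bddAbove
    refine hcomp.mono ?_
    rintro y ⟨⟨x, hx⟩, rfl⟩
    exact ⟨x, hx, by simp [hg x hx]⟩
  have key : ∀ x ∈ Set.Icc a b, |g x - max (x - (a + b) / 2) 0| ≤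
      ⨆ x : Set.Icc a b, |g x - max ((x : ℝ) - (a + b) / 2) 0| := by
    intro x hx
    exact le_ciSup hbdd ⟨x, hx⟩
  have ka := key a hma
  have kc := key c hmc
  have kb := key b hmb
  rw [max_eq_right (by linarith : a - (a + b) / 2 ≤ 0)] at ka
  rw [max_eq_right (by simp [hc] : c - (a + b) / 2 ≤ 0)] at kc
  rw [max_eq_left (by linarith : (0:ℝ) ≤ b - (a + b) / 2)] at kb
  have hga := hg a hma
  have hgc := hg c hmc
  have hgb := hg b hmb
  have habs1 : -(g a - 0) ≤ |g a - 0| := neg_le_abs _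
  have habs2 : g c - 0 ≤ |g c - 0| := le_abs_self _
  have habs3 : -(g b - (b - (a + b) / 2)) ≤ |g b - (b - (a + b) / 2)| := neg_le_abs _
  have hlin : g a + g b - 2 * g c = 0 := by rw [hga, hgb, hgc, hc]; ring
  linarith
end

section
/- For any $C \ge 1$ there exists a ReLU network with width $2$, at most $2\lceil \log_2 C\rceil - 1$ hidden layers, all weights and shifts bounded in absolute value by $1$, that computes the function $x \mapsto Cx$ exactly on $[0,1]$ (equivalently, multiplication by the constant $C$ can be realized with $O(\log C)$ layers and $O(\log C)$ parameters under the unit-bounded-weight constraint). -/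
/-- A feedforward ReLU network with `L` hidden layers, width function `p`
(`p 0` = input dimension, widths `p 1, …, p L` for the hidden layers and output
dimension `1`), weight matrices `W ℓ` mapping layer `ℓ` to layer `ℓ+1`
(`W L` being the final linear output layer, which has no shift and no ReLU),
and shift vectors `v ℓ` applied before each ReLU. Indices outside the declared
widths are ignored by the evaluation. -/
structure ReluNetwork where
  L : ℕ
  p : ℕ → ℕ
  W : ℕ → ℕ → ℕ → ℝ
  v : ℕ → ℕ → ℝ

namespace ReluNetwork

/-- The vector of values computed at layer `ℓ` (after the ReLU), on input `x`. -/
noncomputable def hidden (N : ReluNetwork) : ℕ → (ℕ → ℝ) → ℕ → ℝ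
  | 0, x => fun i => if i < N.p 0 then x i else 0
  | ℓ + 1, x => fun i =>
      if i < N.p (ℓ + 1) then
        max ((∑ j ∈ Finset.range (N.p ℓ), N.W ℓ i j * N.hidden ℓ x j) - N.v ℓ i) 0
      else 0

/-- The real-valued output of the network: the last layer is linear. -/
noncomputable def eval (N : ReluNetwork) (x : ℕ → ℝ) : ℝ :=
  ∑ j ∈ Finset.range (N.p N.L), N.W N.L 0 j * N.hidden N.L x j

/-- All network parameters are bounded in absolute value by one. -/
def bounded (N : ReluNetwork) : Prop :=
  (∀ ℓ i j, |N.W ℓ i j| ≤ 1) ∧ ∀ ℓ i, |N.v ℓ i| ≤ 1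

end ReluNetwork

/-!
Take `n = ⌈log₂ C⌉` hidden layers of width two with zero shifts. The first layer copies
`x ≥ 0` into both neurons and every further layer sums its two equal inputs; on nonnegative
values the ReLUs act as the identity, so each layer doubles. The last hidden layer then holds
`2^(n-1) x` twice, and the output layer with weights `C / 2^n ∈ (0, 1]` returns `C x`.
-/

namespace ReluNetwork

variable {N : ReluNetwork} {ℓ : ℕ} {x : ℕ → ℝ} {a y : ℝ}

theorem hidden_succ_of_const_weights (hW : ∀ i j, N.W ℓ i j = a) (hv : ∀ i, N.v ℓ i = 0)
    (hy : ∀ j < N.p ℓ, N.hidden ℓ x j = y) {i : ℕ} (hi : i < N.p (ℓ + 1)) :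
    N.hidden (ℓ + 1) x i = max (N.p ℓ * (a * y)) 0 := by
  have hterm : ∀ j ∈ Finset.range (N.p ℓ), N.W ℓ i j * N.hidden ℓ x j = a * y :=
    fun j hj => by rw [hW, hy j (Finset.mem_range.mp hj)]
  simp only [hidden, if_pos hi, Finset.sum_congr rfl hterm, Finset.sum_const, Finset.card_range,
    nsmul_eq_mul, hv, sub_zero]

theorem eval_of_const_weights (hW : ∀ j, N.W N.L 0 j = a)
    (hy : ∀ j < N.p N.L, N.hidden N.L x j = y) :
    N.eval x = N.p N.L * (a * y) := by
  have hterm : ∀ j ∈ Finset.range (N.p N.L), N.W N.L 0 j * N.hidden N.L x j = a * y :=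
    fun j hj => by rw [hW, hy j (Finset.mem_range.mp hj)]
  rw [eval, Finset.sum_congr rfl hterm, Finset.sum_const, Finset.card_range, nsmul_eq_mul]

def doubling (n : ℕ) (w : ℝ) : ReluNetwork where
  L := n
  p ℓ := if ℓ = 0 then 1 else 2
  W ℓ _ _ := if ℓ = n then w else 1
  v _ _ := 0

theorem bounded_doubling {n : ℕ} {w : ℝ} (hw : |w| ≤ 1) : (doubling n w).bounded := by
  refine ⟨fun ℓ _ _ => ?_, fun _ _ => by simp [doubling]⟩
  by_cases h : ℓ = n <;> simp [doubling, h, hw]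

theorem hidden_doubling {n : ℕ} {w x : ℝ} (hx : 0 ≤ x) {ℓ : ℕ} (hℓ : ℓ < n) {i : ℕ}
    (hi : i < 2) : (doubling n w).hidden (ℓ + 1) (fun _ => x) i = 2 ^ ℓ * x := by
  have hW : ∀ i j, (doubling n w).W ℓ i j = 1 := fun _ _ => if_neg hℓ.ne
  induction ℓ generalizing i with
  | zero =>
    have hy : ∀ j < (doubling n w).p 0, (doubling n w).hidden 0 (fun _ => x) j = x :=
      fun j hj => if_pos hj
    rw [hidden_succ_of_const_weights hW (fun _ => rfl) hy hi]
    simp [doubling, hx]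
  | succ k ih =>
    have hy : ∀ j < (doubling n w).p (k + 1),
        (doubling n w).hidden (k + 1) (fun _ => x) j = 2 ^ k * x := fun j hj =>
      ih (by omega) (by simpa [doubling] using hj) fun _ _ => if_neg (by omega)
    rw [hidden_succ_of_const_weights hW (fun _ => rfl) hy hi]
    simp only [doubling, if_neg k.succ_ne_zero]
    rw [max_eq_left (by positivity)]
    push_cast
    ring

theorem eval_doubling (n : ℕ) (w : ℝ) {x : ℝ} (hx : 0 ≤ x) :
    (doubling n w).eval (fun _ => x) = w * 2 ^ n * x := by
  have hW : ∀ j, (doubling n w).W (doubling n w).L 0 j = w := fun _ => if_pos rfl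
  cases n with
  | zero =>
    rw [eval_of_const_weights hW (y := x) fun j hj => if_pos hj]
    simp [doubling]
  | succ m =>
    rw [eval_of_const_weights hW fun j hj =>
      hidden_doubling hx m.lt_succ_self (by simpa [doubling] using hj)]
    simp only [doubling, if_neg m.succ_ne_zero]
    push_cast
    ring

end ReluNetwork

theorem le_two_pow_natCeil_logb {C : ℝ} (hC : 0 < C) : C ≤ 2 ^ ⌈Real.logb 2 C⌉₊ := by
  rw [← Real.rpow_natCast, ← Real.logb_le_iff_le_rpow one_lt_two hC]
  exact Nat.le_ceil _

/-- Multiplication by a constant `C ≥ 1` can be realized exactly on `[0,1]` by a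
ReLU network of width `2` with at most `2⌈log₂ C⌉ - 1` hidden layers and all
parameters bounded in absolute value by one. -/
theorem const_mult_relu_network (C : ℝ) (hC : 1 ≤ C) :
    ∃ N : ReluNetwork, N.p 0 = 1 ∧ N.bounded ∧
      N.L ≤ 2 * ⌈Real.logb 2 C⌉₊ - 1 ∧
      (∀ ℓ, 1 ≤ ℓ → ℓ ≤ N.L → N.p ℓ ≤ 2) ∧
      ∀ x ∈ Set.Icc (0:ℝ) 1, N.eval (fun _ => x) = C * x := by
  set n := ⌈Real.logb 2 C⌉₊
  have hpow : (0 : ℝ) < 2 ^ n := by positivity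
  have hw : |C / 2 ^ n| ≤ 1 := by
    rw [abs_of_nonneg (by positivity), div_le_one hpow]
    exact le_two_pow_natCeil_logb (by linarith)
  refine ⟨ReluNetwork.doubling n (C / 2 ^ n), rfl, ReluNetwork.bounded_doubling hw,
    show n ≤ 2 * n - 1 by omega, fun ℓ _ _ => ?_, fun x hx => ?_⟩
  · simp only [ReluNetwork.doubling]
    split_ifs <;> norm_num
  · rw [ReluNetwork.eval_doubling n _ hx.1, div_mul_cancel₀ _ hpow.ne']
end

section
/- For any function $h$ in the bivariate truncated Faber–Schauder class of resolution level $M$, $\sup_{(x_1,x_2)\in[0,1]^2}\big|h(x_1,x_2) - (x_1+x_2-1)_+\big| \ge 2^{-M-1}/8$ (in particular the error is at least $1/(8I)$ with $I = (1+2^M)^2$). -/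
lemma max_sub_eq_zero' {x a : ℝ} (h : x ≤ a) : max (x - a) 0 = 0 :=
  max_eq_right (by linarith)

lemma Dmax (b a : ℝ) (hb : 0 < b) (ha : a = 0 ∨ b ≤ a) :
    max (0 - a) 0 - 2 * max (b/2 - a) 0 + max (b - a) 0 = 0 := by
  rcases ha with rfl | ha
  · rw [max_sub_eq_zero' le_rfl, sub_zero, sub_zero,
      max_eq_left (by positivity : (0:ℝ) ≤ b/2), max_eq_left hb.le]
    ring
  · rw [max_sub_eq_zero' (by linarith), max_sub_eq_zero' (by linarith),
      max_sub_eq_zero' (by linarith)]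
    ring

lemma fs_second_diff (M : ℕ) (ψ : ℝ → ℝ) (hψ : IsFSFun M ψ) :
    ψ 0 - 2 * ψ (1 / 2 ^ (M + 1) / 2) + ψ (1 / 2 ^ (M + 1)) = 0 := by
  have hbpos : (0:ℝ) < 1 / 2 ^ (M + 1) := by positivity
  rcases hψ with h1 | h1 | ⟨j, k, hj, hk, h1⟩
  · rw [h1, h1, h1]; norm_num
  · rw [h1, h1, h1]; ring
  · rw [h1, h1, h1]
    unfold FSfun
    have key : ∀ m : ℕ, m ≤ M + 1 → (1:ℝ) / 2 ^ (M + 1) ≤ 1 / 2 ^ m := by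
      intro m hm
      apply one_div_le_one_div_of_le (by positivity)
      exact pow_le_pow_right₀ (by norm_num) hm
    have ha1 : (k:ℝ) / 2 ^ j = 0 ∨ (1:ℝ) / 2 ^ (M + 1) ≤ (k:ℝ) / 2 ^ j := by
      rcases Nat.eq_zero_or_pos k with rfl | hk1
      · left; simp
      · right
        calc (1:ℝ) / 2 ^ (M + 1) ≤ 1 / 2 ^ j := key j (by omega)
          _ ≤ (k:ℝ) / 2 ^ j := by
              apply (div_le_div_iff_of_pos_right (by positivity)).mpr
              exact_mod_cast hk1
    have ha2 : (1:ℝ) / 2 ^ (M + 1) ≤ ((k:ℝ) + 1 / 2) / 2 ^ j := by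
      calc (1:ℝ) / 2 ^ (M + 1) ≤ 1 / 2 ^ (j + 1) := key (j + 1) (by omega)
        _ = (1 / 2) / 2 ^ j := by rw [pow_succ]; ring
        _ ≤ ((k:ℝ) + 1 / 2) / 2 ^ j := by
            apply (div_le_div_iff_of_pos_right (by positivity)).mpr
            have : (0:ℝ) ≤ (k:ℝ) := Nat.cast_nonneg k
            linarith
    have ha3 : (1:ℝ) / 2 ^ (M + 1) ≤ ((k:ℝ) + 1) / 2 ^ j := by
      calc (1:ℝ) / 2 ^ (M + 1) ≤ 1 / 2 ^ j := key j (by omega)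
        _ ≤ ((k:ℝ) + 1) / 2 ^ j := by
            apply (div_le_div_iff_of_pos_right (by positivity)).mpr
            have : (0:ℝ) ≤ (k:ℝ) := Nat.cast_nonneg k
            linarith
    have d1 := Dmax (1 / 2 ^ (M + 1)) ((k:ℝ) / 2 ^ j) hbpos ha1
    have d2 := Dmax (1 / 2 ^ (M + 1)) (((k:ℝ) + 1 / 2) / 2 ^ j) hbpos (Or.inr ha2)
    have d3 := Dmax (1 / 2 ^ (M + 1)) (((k:ℝ) + 1) / 2 ^ j) hbpos (Or.inr ha3)
    linear_combination (2:ℝ) ^ ((j : ℝ) / 2) * d1 - (2:ℝ) ^ ((j : ℝ) / 2 + 1) * d2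
      + (2:ℝ) ^ ((j : ℝ) / 2) * d3

lemma IsFSFun.continuous {M : ℕ} {ψ : ℝ → ℝ} (h : IsFSFun M ψ) : Continuous ψ := by
  rcases h with h1 | h1 | ⟨j, k, _, _, h1⟩
  · rw [funext h1]; exact continuous_const
  · rw [funext h1]; exact continuous_id
  · rw [funext h1]
    unfold FSfun
    exact (((continuous_const.mul ((continuous_id.sub continuous_const).max
      continuous_const)).sub (continuous_const.mul ((continuous_id.sub
      continuous_const).max continuous_const))).add (continuous_const.mul
      ((continuous_id.sub continuous_const).max continuous_const)))

/-- Any function in the bivariate truncated Faber–Schauder class of level `M`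
(a finite linear combination of tensor products of univariate truncated
Faber–Schauder functions) approximates `(x₁+x₂-1)₊` on `[0,1]²` with sup-norm
error at least `2^{-M-1}/8`. -/
theorem faber_schauder_bivariate_hinge_lower_bound (M n : ℕ)
    (β : Fin n → ℝ) (φ ψ : Fin n → ℝ → ℝ)
    (hφ : ∀ m, IsFSFun M (φ m)) (hψ : ∀ m, IsFSFun M (ψ m))
    (h : ℝ → ℝ → ℝ)
    (hh : ∀ x₁ x₂, h x₁ x₂ = ∑ m, β m * φ m x₁ * ψ m x₂) :
    ((1 : ℝ) / 2 ^ (M + 1)) / 8 ≤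
      ⨆ x₁ : Set.Icc (0:ℝ) 1, ⨆ x₂ : Set.Icc (0:ℝ) 1,
        |h x₁ x₂ - max ((x₁ : ℝ) + (x₂ : ℝ) - 1) 0| := by
  haveI : Nonempty (Set.Icc (0:ℝ) 1) := ⟨⟨0, by norm_num⟩⟩
  set b : ℝ := 1 / 2 ^ (M + 1) with hb
  have hbpos : (0 : ℝ) < b := by rw [hb]; positivity
  have hble : b ≤ 1 := by
    rw [hb, div_le_one (by positivity)]
    calc (1:ℝ) = 1 ^ (M + 1) := by norm_num
      _ ≤ 2 ^ (M + 1) := by gcongr; norm_num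
  clear_value b
  set x2 : ℝ := 1 - b / 2 with hx2
  clear_value x2
  have hx2mem : x2 ∈ Set.Icc (0:ℝ) 1 := ⟨by rw [hx2]; linarith, by rw [hx2]; linarith⟩
  have hp0 : (0:ℝ) ∈ Set.Icc (0:ℝ) 1 := ⟨le_refl 0, by norm_num⟩
  have hp1 : b / 2 ∈ Set.Icc (0:ℝ) 1 := ⟨by linarith, by linarith⟩
  have hp2 : b ∈ Set.Icc (0:ℝ) 1 := ⟨by linarith, by linarith⟩
  -- second difference of h in the first variable vanishes
  have hD : h 0 x2 - 2 * h (b / 2) x2 + h b x2 = 0 := by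
    simp only [hh]
    rw [Finset.mul_sum, ← Finset.sum_sub_distrib, ← Finset.sum_add_distrib]
    refine Finset.sum_eq_zero fun m _ => ?_
    have hm := fs_second_diff M (φ m) (hφ m)
    rw [← hb] at hm
    linear_combination β m * ψ m x2 * hm
  -- values of the target
  have ht0 : max ((0:ℝ) + x2 - 1) 0 = 0 := max_eq_right (by rw [hx2]; linarith)
  have ht1 : max (b / 2 + x2 - 1) 0 = 0 := max_eq_right (by rw [hx2]; linarith)
  have ht2 : max (b + x2 - 1) 0 = b / 2 := by
    rw [max_eq_left (by rw [hx2]; linarith)]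
    rw [hx2]; ring
  -- a uniform bound on the error function, for boundedness of the suprema
  have hcont : Continuous fun p : ℝ × ℝ => |h p.1 p.2 - max (p.1 + p.2 - 1) 0| := by
    have h1 : Continuous fun p : ℝ × ℝ => h p.1 p.2 := by
      have he : (fun p : ℝ × ℝ => h p.1 p.2)
          = fun p : ℝ × ℝ => ∑ m, β m * φ m p.1 * ψ m p.2 := by
        funext p; exact hh p.1 p.2
      rw [he]
      apply continuous_finset_sum
      intro m _
      exact ((continuous_const.mul ((hφ m).continuous.comp continuous_fst)).mul
        ((hψ m).continuous.comp continuous_snd))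
    exact (h1.sub (((continuous_fst.add continuous_snd).sub
      continuous_const).max continuous_const)).abs
  obtain ⟨C, hC⟩ := (isCompact_Icc.prod isCompact_Icc).exists_bound_of_continuousOn
    (s := Set.Icc (0:ℝ) 1 ×ˢ Set.Icc (0:ℝ) 1) hcont.continuousOn
  have hCb : ∀ (x₁ x₂ : Set.Icc (0:ℝ) 1),
      |h x₁ x₂ - max ((x₁:ℝ) + (x₂:ℝ) - 1) 0| ≤ C := by
    intro x₁ x₂
    have := hC (x₁, x₂) ⟨x₁.2, x₂.2⟩
    simpa [Real.norm_eq_abs, abs_abs] using this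
  have hbdd : ∀ y₁ : Set.Icc (0:ℝ) 1,
      BddAbove (Set.range fun y₂ : Set.Icc (0:ℝ) 1 =>
        |h y₁ y₂ - max ((y₁:ℝ) + (y₂:ℝ) - 1) 0|) := by
    intro y₁
    exact ⟨C, by rintro _ ⟨y₂, rfl⟩; exact hCb y₁ y₂⟩
  have hbdd2 : BddAbove (Set.range fun y₁ : Set.Icc (0:ℝ) 1 =>
      ⨆ y₂ : Set.Icc (0:ℝ) 1, |h y₁ y₂ - max ((y₁:ℝ) + (y₂:ℝ) - 1) 0|) :=
    ⟨C, by rintro _ ⟨y₁, rfl⟩; exact ciSup_le fun y₂ => hCb y₁ y₂⟩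
  -- the double supremum dominates every value
  have hle : ∀ x₁ ∈ Set.Icc (0:ℝ) 1, ∀ x₂ ∈ Set.Icc (0:ℝ) 1,
      |h x₁ x₂ - max (x₁ + x₂ - 1) 0| ≤
      ⨆ y₁ : Set.Icc (0:ℝ) 1, ⨆ y₂ : Set.Icc (0:ℝ) 1,
        |h y₁ y₂ - max ((y₁ : ℝ) + (y₂ : ℝ) - 1) 0| := by
    intro x₁ h₁ x₂ h₂
    have step1 : |h x₁ x₂ - max (x₁ + x₂ - 1) 0| ≤
        ⨆ y₂ : Set.Icc (0:ℝ) 1,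
          |h (⟨x₁, h₁⟩ : Set.Icc (0:ℝ) 1) y₂ - max (x₁ + (y₂:ℝ) - 1) 0| :=
      le_ciSup (hbdd ⟨x₁, h₁⟩) ⟨x₂, h₂⟩
    exact step1.trans (le_ciSup hbdd2 ⟨x₁, h₁⟩)
  have e0 := hle 0 hp0 x2 hx2mem
  have e1 := hle (b / 2) hp1 x2 hx2mem
  have e2 := hle b hp2 x2 hx2mem
  rw [ht0] at e0
  rw [ht1] at e1
  rw [ht2] at e2
  have a0l := neg_abs_le (h 0 x2 - 0)
  have a0r := le_abs_self (h 0 x2 - 0)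
  have a1l := neg_abs_le (h (b / 2) x2 - 0)
  have a1r := le_abs_self (h (b / 2) x2 - 0)
  have a2l := neg_abs_le (h b x2 - b / 2)
  have a2r := le_abs_self (h b x2 - b / 2)
  linarith
end

section
/- For every $N \ge 1$ there exists a ReLU network $\mathrm{Mult}_N$ with all parameters bounded in absolute value by $1$, depth $O(N)$, and width $O(1)$, such that $\mathrm{Mult}_N(x,y) \in [0,1]$ and $|\mathrm{Mult}_N(x,y) - xy| \le 2^{-N}$ for all $x,y \in [0,1]$. -/
noncomputable def gg (t : ℝ) : ℝ := min (2*t) (2-2*t)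
noncomputable def TT : ℕ → ℝ → ℝ
  | 0, t => t
  | k+1, t => gg (TT k t)

noncomputable def W0 : ℕ → ℕ → ℝ := fun i j =>
  if i = 1 ∧ j = 0 then 1/2 else if i = 2 ∧ j = 1 then 1/2
  else if i = 3 then 1
  else if i = 4 ∧ j = 0 then 1 else if i = 5 ∧ j = 1 then 1
  else if i = 6 then 1/2 else 0

noncomputable def WA : ℕ → ℕ → ℝ := fun i j =>
  if i < 10 then (if j = i then 1 else 0)
  else if i = 10 ∧ j = 4 then 1 else if i = 11 ∧ j = 5 then 1
  else if (i = 12 ∨ i = 13) ∧ j = 6 then 1 else 0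

noncomputable def WB : ℕ → ℕ → ℝ := fun i j =>
  if i ≤ 3 then (if j = i then 1 else 0)
  else if i = 4 then (if j = 4 then 1/2 else if j = 10 then -1 else 0)
  else if i = 5 then (if j = 5 then 1/2 else if j = 11 then -1 else 0)
  else if i = 6 then (if j = 6 then 1/2 else if j = 12 then -1 else 0)
  else if i = 7 then (if j = 7 then 1 else if j = 4 then 1/4 else if j = 10 then -(1/2) else 0)
  else if i = 8 then (if j = 8 then 1 else if j = 5 then 1/4 else if j = 11 then -(1/2) else 0)
  else if i = 9 then (if j = 9 then 1 else if j = 6 then 1 else if j = 12 then -1 else if j = 13 then -1 else 0)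
  else 0

noncomputable def WM : ℕ → ℕ → ℝ := fun i j =>
  if i = 0 then (if j = 0 then 1 else 0)
  else if i = 1 then (if j = 3 then 1 else if j = 9 then -1 else if j = 1 then -1
    else if j = 7 then 1 else if j = 2 then -1 else if j = 8 then 1 else 0)
  else 0

noncomputable def WC : ℕ → ℕ → ℝ := fun i j =>
  if i = 0 ∧ j = 0 then 1
  else if i = 1 then (if j = 0 then 1 else if j = 1 then -1 else 0) else 0

noncomputable def Wout : ℕ → ℕ → ℝ := fun i j =>
  if i = 0 then (if j = 0 then 1 else if j = 1 then -1 else 0) else 0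

noncomputable def netW (m : ℕ) (ℓ : ℕ) : ℕ → ℕ → ℝ :=
  if ℓ = 0 then W0 else if ℓ = 2*m+1 then WM else if ℓ = 2*m+2 then WC
  else if 2*m+3 ≤ ℓ then Wout else if ℓ % 2 = 1 then WA else WB

noncomputable def vA (k : ℕ) : ℕ → ℝ := fun i =>
  if 10 ≤ i ∧ i ≤ 13 then (1/4:ℝ)^k/2 else 0

noncomputable def netv (m : ℕ) (ℓ : ℕ) : ℕ → ℝ :=
  if ℓ = 0 then (fun i => if i = 0 then (-1:ℝ) else 0)
  else if ℓ ≤ 2*m ∧ ℓ % 2 = 1 then vA (ℓ/2) else fun _ => 0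

noncomputable def net (m : ℕ) : ReluNetwork :=
  ⟨2*m+3, fun ℓ => if ℓ = 0 then 2 else if ℓ ≤ 2*m+1 then 14 else 2, netW m, netv m⟩

noncomputable def stB (x y : ℝ) (k : ℕ) : ℕ → ℝ := fun i =>
  if i = 0 then 1 else if i = 1 then x/2 else if i = 2 then y/2 else if i = 3 then x+y
  else if i = 4 then TT k x * (1/4)^k else if i = 5 then TT k y * (1/4)^k
  else if i = 6 then TT k ((x+y)/2) * (1/4)^k
  else if i = 7 then (∑ j ∈ Finset.range k, TT (j+1) x * (1/4:ℝ)^(j+1))/2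
  else if i = 8 then (∑ j ∈ Finset.range k, TT (j+1) y * (1/4:ℝ)^(j+1))/2
  else if i = 9 then 2*∑ j ∈ Finset.range k, TT (j+1) ((x+y)/2) * (1/4:ℝ)^(j+1)
  else 0

noncomputable def stA (x y : ℝ) (k : ℕ) : ℕ → ℝ := fun i =>
  if i < 10 then stB x y k i
  else if i = 10 then max (TT k x * (1/4)^k - (1/4:ℝ)^k/2) 0
  else if i = 11 then max (TT k y * (1/4)^k - (1/4:ℝ)^k/2) 0
  else if i = 12 ∨ i = 13 then max (TT k ((x+y)/2) * (1/4)^k - (1/4:ℝ)^k/2) 0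
  else 0

lemma hidden_succ (Net : ReluNetwork) (ℓ : ℕ) (x : ℕ → ℝ) :
    Net.hidden (ℓ+1) x = fun i =>
      if i < Net.p (ℓ+1) then
        max ((∑ j ∈ Finset.range (Net.p ℓ), Net.W ℓ i j * Net.hidden ℓ x j) - Net.v ℓ i) 0
      else 0 := rfl

lemma relu_scale {q : ℝ} (hq : 0 ≤ q) (a : ℝ) : max (q*a) 0 = q * max a 0 := by
  rcases le_total a 0 with h | h
  · rw [max_eq_right (by nlinarith), max_eq_right h, mul_zero]
  · rw [max_eq_left (by nlinarith), max_eq_left h]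

lemma key0 {T : ℝ} (hT : T ∈ Set.Icc (0:ℝ) 1) :
    T/2 - max (T - 1/2) 0 = gg T / 4 := by
  obtain ⟨h0, h1⟩ := hT
  rcases le_total T (1/2) with h | h
  · rw [max_eq_right (by linarith), gg, min_eq_left (by linarith)]; ring
  · rw [max_eq_left (by linarith), gg, min_eq_right (by linarith)]; ring

lemma key0s {T q : ℝ} (hT : T ∈ Set.Icc (0:ℝ) 1) (hq : 0 ≤ q) :
    T*q/2 - max (T*q - q/2) 0 = gg T * q / 4 := by
  have h1 : T*q - q/2 = q * (T - 1/2) := by ring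
  rw [h1, relu_scale hq]
  have := key0 hT
  nlinarith [this]

lemma gg_mem' {t : ℝ} (ht : t ∈ Set.Icc (0:ℝ) 1) : gg t ∈ Set.Icc (0:ℝ) 1 := by
  obtain ⟨h0, h1⟩ := ht
  constructor
  · simp only [gg, le_min_iff]; constructor <;> linarith
  · rcases le_total t (1/2) with h | h
    · calc gg t ≤ 2*t := min_le_left _ _
        _ ≤ 1 := by linarith
    · calc gg t ≤ 2-2*t := min_le_right _ _
        _ ≤ 1 := by linarith

lemma TT_mem {t : ℝ} (ht : t ∈ Set.Icc (0:ℝ) 1) (k : ℕ) : TT k t ∈ Set.Icc (0:ℝ) 1 := by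
  induction k with
  | zero => exact ht
  | succ k ih => exact gg_mem' ih

section
variable (m : ℕ)

lemma netW_zero : netW m 0 = W0 := by simp [netW]
lemma netW_odd {k : ℕ} (hk : k < m) : netW m (2*k+1) = WA := by
  unfold netW
  rw [if_neg (by omega), if_neg (by omega), if_neg (by omega), if_neg (by omega),
    if_pos (by omega)]
lemma netW_even {k : ℕ} (hk : k < m) : netW m (2*k+1+1) = WB := by
  unfold netW
  rw [if_neg (by omega), if_neg (by omega), if_neg (by omega), if_neg (by omega),
    if_neg (by omega)]
lemma netv_zero : netv m 0 = fun i => if i = 0 then (-1:ℝ) else 0 := by simp [netv]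
lemma netv_odd {k : ℕ} (hk : k < m) : netv m (2*k+1) = vA k := by
  unfold netv
  rw [if_neg (by omega), if_pos (by constructor <;> omega),
    show (2*k+1)/2 = k by omega]
lemma netv_even {k : ℕ} (hk : k < m) : netv m (2*k+1+1) = fun _ => (0:ℝ) := by
  unfold netv
  rw [if_neg (by omega), if_neg (by omega)]
lemma p_zero : (net m).p 0 = 2 := by simp [net]
lemma p_mid {ℓ : ℕ} (h1 : 1 ≤ ℓ) (h2 : ℓ ≤ 2*m+1) : (net m).p ℓ = 14 := by
  show (if ℓ = 0 then 2 else if ℓ ≤ 2*m+1 then 14 else 2) = 14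
  rw [if_neg (by omega), if_pos h2]
lemma p_high {ℓ : ℕ} (h2 : 2*m+1 < ℓ) : (net m).p ℓ = 2 := by
  show (if ℓ = 0 then 2 else if ℓ ≤ 2*m+1 then 14 else 2) = 2
  rw [if_neg (by omega), if_neg (by omega)]

end

set_option maxHeartbeats 16000000 in
lemma invariant (m : ℕ) (x y : ℝ) (hx : x ∈ Set.Icc (0:ℝ) 1) (hy : y ∈ Set.Icc (0:ℝ) 1) :
    ∀ k, k ≤ m → (net m).hidden (2*k+1) (fun i => if i = 0 then x else y) = stB x y k := by
  obtain ⟨hx0, hx1⟩ := hx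
  obtain ⟨hy0, hy1⟩ := hy
  intro k hk
  induction k with
  | zero =>
    rw [show 2*0+1 = 0+1 by rfl, hidden_succ]
    funext i
    show (if i < (net m).p (0+1) then
        max ((∑ j ∈ Finset.range ((net m).p 0), (net m).W 0 i j *
          (net m).hidden 0 (fun i => if i = 0 then x else y) j) - (net m).v 0 i) 0
      else 0) = stB x y 0 i
    rw [p_mid m (by omega) (by omega), p_zero]
    have hW : (net m).W 0 = W0 := netW_zero m
    have hv : (net m).v 0 = fun i => if i = 0 then (-1:ℝ) else 0 := netv_zero m
    rw [hW, hv]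
    have hh : ∀ j, (net m).hidden 0 (fun i => if i = 0 then x else y) j
        = if j < 2 then (if j = 0 then x else y) else 0 := by
      intro j; rfl
    by_cases hi : i < 14
    · interval_cases i <;>
        simp [hh, Finset.sum_range_succ, W0, stB, TT] <;>
        first
          | (rw [max_eq_left (by linarith)]; ring)
          | linarith
          | positivity
          | ring
          | rfl
    · rw [if_neg hi, stB, if_neg (by omega), if_neg (by omega), if_neg (by omega),
        if_neg (by omega), if_neg (by omega), if_neg (by omega), if_neg (by omega),
        if_neg (by omega), if_neg (by omega), if_neg (by omega)]
  | succ k ih =>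
    have hk' : k < m := by omega
    have ihh := ih (by omega)
    have hz : (x+y)/2 ∈ Set.Icc (0:ℝ) 1 := ⟨by linarith, by linarith⟩
    have hq : (0:ℝ) ≤ (1/4:ℝ)^k := by positivity
    have hTx := TT_mem ⟨hx0,hx1⟩
    have hTy := TT_mem ⟨hy0,hy1⟩
    have hTz := TT_mem hz
    have hSx : 0 ≤ ∑ j ∈ Finset.range k, TT (j+1) x * (1/4:ℝ)^(j+1) :=
      Finset.sum_nonneg fun j _ => mul_nonneg (hTx (j+1)).1 (by positivity)
    have hSy : 0 ≤ ∑ j ∈ Finset.range k, TT (j+1) y * (1/4:ℝ)^(j+1) :=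
      Finset.sum_nonneg fun j _ => mul_nonneg (hTy (j+1)).1 (by positivity)
    have hSz : 0 ≤ ∑ j ∈ Finset.range k, TT (j+1) ((x+y)/2) * (1/4:ℝ)^(j+1) :=
      Finset.sum_nonneg fun j _ => mul_nonneg (hTz (j+1)).1 (by positivity)
    have hTx0 := (hTx k).1
    have hTy0 := (hTy k).1
    have hTz0 := (hTz k).1
    have hmx : 0 ≤ TT k x * (1/4:ℝ)^k := mul_nonneg (hTx k).1 hq
    have hmy : 0 ≤ TT k y * (1/4:ℝ)^k := mul_nonneg (hTy k).1 hq
    have hmz : 0 ≤ TT k ((x+y)/2) * (1/4:ℝ)^k := mul_nonneg (hTz k).1 hq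
    have hA : (net m).hidden (2*k+1+1) (fun i => if i = 0 then x else y) = stA x y k := by
      rw [hidden_succ]
      funext i
      show (if i < (net m).p (2*k+1+1) then
          max ((∑ j ∈ Finset.range ((net m).p (2*k+1)), (net m).W (2*k+1) i j *
            (net m).hidden (2*k+1) (fun i => if i = 0 then x else y) j) - (net m).v (2*k+1) i) 0
        else 0) = stA x y k i
      rw [p_mid m (by omega) (by omega), p_mid m (by omega) (by omega)]
      show (if i < 14 then
          max ((∑ j ∈ Finset.range 14, netW m (2*k+1) i j *
            (net m).hidden (2*k+1) (fun i => if i = 0 then x else y) j) - netv m (2*k+1) i) 0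
        else 0) = stA x y k i
      rw [netW_odd m hk', netv_odd m hk', ihh]
      by_cases hi : i < 14
      · interval_cases i <;>
          simp only [Finset.sum_range_succ, Finset.sum_range_zero, WA, vA, stA, stB,
            Nat.reduceEqDiff, Nat.reduceLT, Nat.reduceLeDiff, if_true, if_false,
            true_and, and_true, false_and, and_false, true_or, or_true, false_or, or_false,
            reduceIte, mul_zero, zero_mul, add_zero, zero_add, mul_one, one_mul,
            sub_zero, neg_mul, neg_zero] <;>
          first
            | (rw [max_eq_left (by linarith)]; try ring)
            | linarith
            | positivity
            | ring
            | rfl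
      · rw [if_neg hi]
        simp only [stA]
        rw [if_neg (by omega), if_neg (by omega), if_neg (by omega), if_neg (by omega)]
    have hx4 := key0s (hTx k) hq
    have hy4 := key0s (hTy k) hq
    have hz4 := key0s (hTz k) hq
    have hgx := mul_nonneg (gg_mem' (hTx k)).1 hq
    have hgy := mul_nonneg (gg_mem' (hTy k)).1 hq
    have hgz := mul_nonneg (gg_mem' (hTz k)).1 hq
    rw [show 2*(k+1)+1 = 2*k+1+1+1 by ring, hidden_succ]
    funext i
    show (if i < (net m).p (2*k+1+1+1) then
        max ((∑ j ∈ Finset.range ((net m).p (2*k+1+1)), (net m).W (2*k+1+1) i j *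
          (net m).hidden (2*k+1+1) (fun i => if i = 0 then x else y) j) - (net m).v (2*k+1+1) i) 0
      else 0) = stB x y (k+1) i
    rw [p_mid m (by omega) (by omega), p_mid m (by omega) (by omega)]
    show (if i < 14 then
        max ((∑ j ∈ Finset.range 14, netW m (2*k+1+1) i j *
          (net m).hidden (2*k+1+1) (fun i => if i = 0 then x else y) j) - netv m (2*k+1+1) i) 0
      else 0) = stB x y (k+1) i
    rw [netW_even m hk', netv_even m hk', hA]
    by_cases hi : i < 14
    · interval_cases i <;>
        simp only [show ∀ t, TT (k+1) t = gg (TT k t) from fun _ => rfl,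
          Finset.sum_range_succ, Finset.sum_range_zero, WB, stA, stB,
          Nat.reduceEqDiff, Nat.reduceLT, Nat.reduceLeDiff, if_true, if_false,
            true_and, and_true, false_and, and_false, true_or, or_true, false_or, or_false,
            reduceIte, mul_zero, zero_mul, add_zero, zero_add, mul_one, one_mul,
          sub_zero, neg_mul, neg_zero] <;>
        first
          | (rw [max_eq_left (by linarith)]; linear_combination hx4)
          | (rw [max_eq_left (by linarith)]; linear_combination hy4)
          | (rw [max_eq_left (by linarith)]; linear_combination hz4)
          | (rw [max_eq_left (by linarith)]; linear_combination (1/2 : ℝ) * hx4)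
          | (rw [max_eq_left (by linarith)]; linear_combination (1/2 : ℝ) * hy4)
          | (rw [max_eq_left (by linarith)]; linear_combination (2 : ℝ) * hz4)
          | (rw [max_eq_left (by linarith)]; try ring)
          | linarith
          | positivity
          | ring
          | rfl
    · rw [if_neg hi]
      simp only [stB]
      rw [if_neg (by omega), if_neg (by omega), if_neg (by omega), if_neg (by omega),
        if_neg (by omega), if_neg (by omega), if_neg (by omega), if_neg (by omega),
        if_neg (by omega), if_neg (by omega)]

noncomputable def Mval (x y : ℝ) (m : ℕ) : ℝ :=
  (x+y) - 2*(∑ j ∈ Finset.range m, TT (j+1) ((x+y)/2) * (1/4:ℝ)^(j+1))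
  - x/2 + (∑ j ∈ Finset.range m, TT (j+1) x * (1/4:ℝ)^(j+1))/2
  - y/2 + (∑ j ∈ Finset.range m, TT (j+1) y * (1/4:ℝ)^(j+1))/2

lemma eval_form (m : ℕ) (hm : 1 ≤ m) (x y : ℝ) (hx : x ∈ Set.Icc (0:ℝ) 1)
    (hy : y ∈ Set.Icc (0:ℝ) 1) :
    (net m).eval (fun i => if i = 0 then x else y)
      = 1 - max (1 - max (Mval x y m) 0) 0 := by
  have hB := invariant m x y hx hy m le_rfl
  have hWM : (net m).W (2*m+1) = WM := by
    show netW m (2*m+1) = WM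
    unfold netW
    rw [if_neg (by omega), if_pos rfl]
  have hvM : (net m).v (2*m+1) = fun _ => (0:ℝ) := by
    show netv m (2*m+1) = fun _ => (0:ℝ)
    unfold netv
    rw [if_neg (by omega), if_neg (by omega)]
  have hL1 : (net m).hidden (2*m+1+1) (fun i => if i = 0 then x else y)
      = fun i => if i = 0 then 1 else if i = 1 then max (Mval x y m) 0 else 0 := by
    rw [hidden_succ]
    funext i
    show (if i < (net m).p (2*m+1+1) then
        max ((∑ j ∈ Finset.range ((net m).p (2*m+1)), (net m).W (2*m+1) i j *
          (net m).hidden (2*m+1) (fun i => if i = 0 then x else y) j) - (net m).v (2*m+1) i) 0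
      else 0) = _
    rw [p_high m (by omega), p_mid m (by omega) (by omega), hWM, hvM, hB]
    by_cases hi : i < 2
    · interval_cases i
      · simp only [Finset.sum_range_succ, Finset.sum_range_zero, WM, stB,
          Nat.reduceEqDiff, Nat.reduceLT, Nat.reduceLeDiff, if_true, if_false,
            true_and, and_true, false_and, and_false, true_or, or_true, false_or, or_false,
            reduceIte, mul_zero, zero_mul, add_zero, zero_add, mul_one, one_mul,
          sub_zero, neg_mul, neg_zero]
        rw [max_eq_left (by norm_num)]
      · simp only [Finset.sum_range_succ, Finset.sum_range_zero, WM, stB,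
          Nat.reduceEqDiff, Nat.reduceLT, Nat.reduceLeDiff, if_true, if_false,
            true_and, and_true, false_and, and_false, true_or, or_true, false_or, or_false,
            reduceIte, mul_zero, zero_mul, add_zero, zero_add, mul_one, one_mul,
          sub_zero, neg_mul, neg_zero]
        congr 1
        unfold Mval
        ring
    · rw [if_neg hi, if_neg (by omega), if_neg (by omega)]
  have hWC : (net m).W (2*m+1+1) = WC := by
    show netW m (2*m+1+1) = WC
    unfold netW
    rw [if_neg (by omega), if_neg (by omega), if_pos (by omega)]
  have hvC : (net m).v (2*m+1+1) = fun _ => (0:ℝ) := by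
    show netv m (2*m+1+1) = fun _ => (0:ℝ)
    unfold netv
    rw [if_neg (by omega), if_neg (by omega)]
  have hL2 : (net m).hidden (2*m+1+1+1) (fun i => if i = 0 then x else y)
      = fun i => if i = 0 then 1 else if i = 1 then max (1 - max (Mval x y m) 0) 0
          else 0 := by
    rw [hidden_succ]
    funext i
    show (if i < (net m).p (2*m+1+1+1) then
        max ((∑ j ∈ Finset.range ((net m).p (2*m+1+1)), (net m).W (2*m+1+1) i j *
          (net m).hidden (2*m+1+1) (fun i => if i = 0 then x else y) j) - (net m).v (2*m+1+1) i) 0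
      else 0) = _
    rw [p_high m (by omega), p_high m (by omega), hWC, hvC, hL1]
    by_cases hi : i < 2
    · interval_cases i
      · simp only [Finset.sum_range_succ, Finset.sum_range_zero, WC,
          Nat.reduceEqDiff, Nat.reduceLT, Nat.reduceLeDiff, if_true, if_false,
            true_and, and_true, false_and, and_false, true_or, or_true, false_or, or_false,
            reduceIte, mul_zero, zero_mul, add_zero, zero_add, mul_one, one_mul,
          sub_zero, neg_mul, neg_zero]
        rw [max_eq_left (by norm_num)]
      · simp only [Finset.sum_range_succ, Finset.sum_range_zero, WC,
          Nat.reduceEqDiff, Nat.reduceLT, Nat.reduceLeDiff, if_true, if_false,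
            true_and, and_true, false_and, and_false, true_or, or_true, false_or, or_false,
            reduceIte, mul_zero, zero_mul, add_zero, zero_add, mul_one, one_mul,
          sub_zero, neg_mul, neg_zero]
        congr 1
        try ring
    · rw [if_neg hi, if_neg (by omega), if_neg (by omega)]
  have hWout : (net m).W (2*m+3) = Wout := by
    show netW m (2*m+3) = Wout
    unfold netW
    rw [if_neg (by omega), if_neg (by omega), if_neg (by omega), if_pos (by omega)]
  show ∑ j ∈ Finset.range ((net m).p (net m).L), (net m).W (net m).L 0 j *
    (net m).hidden (net m).L (fun i => if i = 0 then x else y) j = _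
  have hLL : (net m).L = 2*m+1+1+1 := by show 2*m+3 = 2*m+1+1+1; ring
  rw [hLL, p_high m (by omega), show (net m).W (2*m+1+1+1) = Wout from by
    rw [show 2*m+1+1+1 = 2*m+3 from by ring]; exact hWout, hL2]
  simp only [Finset.sum_range_succ, Finset.sum_range_zero, Wout,
    Nat.reduceEqDiff, Nat.reduceLT, Nat.reduceLeDiff, if_true, if_false,
            true_and, and_true, false_and, and_false, true_or, or_true, false_or, or_false,
            reduceIte, mul_zero, zero_mul, add_zero, zero_add, mul_one, one_mul,
    sub_zero, neg_mul, neg_zero]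
  ring

lemma W0_bdd (i j : ℕ) : |W0 i j| ≤ 1 := by
  unfold W0; split_ifs <;> rw [abs_le] <;> constructor <;> norm_num
lemma WA_bdd (i j : ℕ) : |WA i j| ≤ 1 := by
  unfold WA; split_ifs <;> rw [abs_le] <;> constructor <;> norm_num
set_option maxHeartbeats 1000000 in
lemma WB_bdd (i j : ℕ) : |WB i j| ≤ 1 := by
  unfold WB; split_ifs <;> rw [abs_le] <;> constructor <;> norm_num
lemma WM_bdd (i j : ℕ) : |WM i j| ≤ 1 := by
  unfold WM; split_ifs <;> rw [abs_le] <;> constructor <;> norm_num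
lemma WC_bdd (i j : ℕ) : |WC i j| ≤ 1 := by
  unfold WC; split_ifs <;> rw [abs_le] <;> constructor <;> norm_num
lemma Wout_bdd (i j : ℕ) : |Wout i j| ≤ 1 := by
  unfold Wout; split_ifs <;> rw [abs_le] <;> constructor <;> norm_num

lemma net_bounded (m : ℕ) : (net m).bounded := by
  constructor
  · intro ℓ i j
    show |netW m ℓ i j| ≤ 1
    unfold netW
    split_ifs
    · exact W0_bdd i j
    · exact WM_bdd i j
    · exact WC_bdd i j
    · exact Wout_bdd i j
    · exact WA_bdd i j
    · exact WB_bdd i j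
  · intro ℓ i
    show |netv m ℓ i| ≤ 1
    have h1 : ((1:ℝ)/4)^(ℓ/2) ≤ 1 := pow_le_one₀ (by norm_num) (by norm_num)
    have h0 : (0:ℝ) ≤ ((1:ℝ)/4)^(ℓ/2) := by positivity
    by_cases hz : ℓ = 0
    · subst hz
      rw [show netv m 0 i = (if i = 0 then (-1:ℝ) else 0) from by
        unfold netv; rw [if_pos rfl]]
      split_ifs <;> rw [abs_le] <;> constructor <;> norm_num
    · by_cases hm2 : ℓ ≤ 2*m ∧ ℓ % 2 = 1
      · rw [show netv m ℓ i = vA (ℓ/2) i from by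
          unfold netv; rw [if_neg hz, if_pos hm2]]
        unfold vA; split_ifs <;> rw [abs_le] <;> constructor <;> linarith
      · rw [show netv m ℓ i = 0 from by
          unfold netv; rw [if_neg hz, if_neg hm2]]
        norm_num

lemma clip_facts (A q : ℝ) (h0 : 0 ≤ q) (h1 : q ≤ 1) (e : ℝ) (he : |A - q| ≤ e) :
    (1 - max (1 - max A 0) 0) ∈ Set.Icc (0:ℝ) 1 ∧ |(1 - max (1 - max A 0) 0) - q| ≤ e := by
  have he0 : 0 ≤ e := le_trans (abs_nonneg _) he
  rw [abs_le] at he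
  rcases le_total A 0 with hA | hA
  · rw [max_eq_right hA, max_eq_left (by norm_num)]
    refine ⟨⟨by norm_num, by norm_num⟩, ?_⟩
    rw [abs_le]; constructor <;> linarith
  · rw [max_eq_left hA]
    rcases le_total A 1 with hA1 | hA1
    · rw [max_eq_left (by linarith)]
      refine ⟨⟨by linarith, by linarith⟩, ?_⟩
      rw [abs_le]; constructor <;> linarith
    · rw [max_eq_right (by linarith)]
      refine ⟨⟨by norm_num, by norm_num⟩, ?_⟩
      rw [abs_le]; constructor <;> linarith

lemma key2 {T : ℝ} (hT : T ∈ Set.Icc (0:ℝ) 1) :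
    4*(T - T^2) = 2*gg T - (gg T)^2 := by
  obtain ⟨h0, h1⟩ := hT
  rcases le_total T (1/2) with h | h
  · rw [gg, min_eq_left (by linarith)]; ring
  · rw [gg, min_eq_right (by linarith)]; ring

lemma sumid {t : ℝ} (ht : t ∈ Set.Icc (0:ℝ) 1) (k : ℕ) :
    t - t^2 = (∑ j ∈ Finset.range k, TT (j+1) t * (1/4:ℝ)^(j+1))
      + (TT k t - (TT k t)^2) * (1/4)^k := by
  induction k with
  | zero => simp [TT]
  | succ k ih =>
    rw [Finset.sum_range_succ]
    have h2 := key2 (TT_mem ht k)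
    have h3 : TT (k+1) t = gg (TT k t) := rfl
    rw [h3, ih]
    linear_combination ((1/4:ℝ))^(k+1) * h2

lemma TT_sub_sq_mem {t : ℝ} (ht : t ∈ Set.Icc (0:ℝ) 1) (k : ℕ) :
    TT k t - (TT k t)^2 ∈ Set.Icc (0:ℝ) (1/4) := by
  obtain ⟨h0, h1⟩ := TT_mem ht k
  constructor
  · nlinarith
  · nlinarith [sq_nonneg (TT k t - 1/2)]

lemma Mval_err (m : ℕ) (x y : ℝ) (hx : x ∈ Set.Icc (0:ℝ) 1) (hy : y ∈ Set.Icc (0:ℝ) 1) :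
    |Mval x y m - x * y| ≤ (1/4:ℝ)^m := by
  obtain ⟨hx0, hx1⟩ := hx
  obtain ⟨hy0, hy1⟩ := hy
  have hz : (x+y)/2 ∈ Set.Icc (0:ℝ) 1 := ⟨by linarith, by linarith⟩
  have hq : (0:ℝ) ≤ (1/4:ℝ)^m := by positivity
  have hX := sumid ⟨hx0, hx1⟩ m
  have hY := sumid ⟨hy0, hy1⟩ m
  have hZ := sumid hz m
  obtain ⟨hdx0, hdx1⟩ := TT_sub_sq_mem ⟨hx0, hx1⟩ m
  obtain ⟨hdy0, hdy1⟩ := TT_sub_sq_mem ⟨hy0, hy1⟩ m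
  obtain ⟨hdz0, hdz1⟩ := TT_sub_sq_mem hz m
  have hmx0 : 0 ≤ (TT m x - (TT m x)^2) * (1/4:ℝ)^m := mul_nonneg hdx0 hq
  have hmy0 : 0 ≤ (TT m y - (TT m y)^2) * (1/4:ℝ)^m := mul_nonneg hdy0 hq
  have hmz0 : 0 ≤ (TT m ((x+y)/2) - (TT m ((x+y)/2))^2) * (1/4:ℝ)^m := mul_nonneg hdz0 hq
  have hmx1 : (TT m x - (TT m x)^2) * (1/4:ℝ)^m ≤ (1/4) * (1/4:ℝ)^m :=
    mul_le_mul_of_nonneg_right hdx1 hq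
  have hmy1 : (TT m y - (TT m y)^2) * (1/4:ℝ)^m ≤ (1/4) * (1/4:ℝ)^m :=
    mul_le_mul_of_nonneg_right hdy1 hq
  have hmz1 : (TT m ((x+y)/2) - (TT m ((x+y)/2))^2) * (1/4:ℝ)^m ≤ (1/4) * (1/4:ℝ)^m :=
    mul_le_mul_of_nonneg_right hdz1 hq
  have hkey : Mval x y m - x * y
      = 2*((TT m ((x+y)/2) - (TT m ((x+y)/2))^2) * (1/4:ℝ)^m)
        - ((TT m x - (TT m x)^2) * (1/4:ℝ)^m)/2
        - ((TT m y - (TT m y)^2) * (1/4:ℝ)^m)/2 := by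
    unfold Mval
    linear_combination (-1/2:ℝ) * hX + (-1/2:ℝ) * hY + 2 * hZ
  rw [hkey, abs_le]
  constructor <;> linarith


/-- For every `N ≥ 1` there is a ReLU network with all parameters bounded by one,
depth `O(N)` and width `O(1)`, computing a value in `[0,1]` that approximates the
product `xy` on `[0,1]²` up to error `2^{-N}`. -/
theorem approximate_multiplication_relu_network :
    ∃ c w : ℕ, ∀ N : ℕ, 1 ≤ N →
      ∃ Net : ReluNetwork, Net.p 0 = 2 ∧ Net.bounded ∧
        Net.L ≤ c * N ∧ (∀ ℓ, Net.p ℓ ≤ w) ∧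
        ∀ x ∈ Set.Icc (0:ℝ) 1, ∀ y ∈ Set.Icc (0:ℝ) 1,
          Net.eval (fun i => if i = 0 then x else y) ∈ Set.Icc (0:ℝ) 1 ∧
          |Net.eval (fun i => if i = 0 then x else y) - x * y| ≤ (2:ℝ)⁻¹ ^ N := by
  refine ⟨5, 14, fun N hN => ⟨net N, p_zero N, net_bounded N, ?_, ?_, ?_⟩⟩
  · show 2*N+3 ≤ 5*N; omega
  · intro ℓ
    show (if ℓ = 0 then 2 else if ℓ ≤ 2*N+1 then 14 else 2) ≤ 14
    split_ifs <;> norm_num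
  · intro x hx y hy
    have herr : |Mval x y N - x * y| ≤ (2:ℝ)⁻¹ ^ N := by
      refine (Mval_err N x y hx hy).trans ?_
      have : ((1:ℝ)/4)^N ≤ ((1:ℝ)/2)^N :=
        pow_le_pow_left₀ (by norm_num) (by norm_num) N
      calc ((1:ℝ)/4)^N ≤ ((1:ℝ)/2)^N := this
        _ = (2:ℝ)⁻¹ ^ N := by norm_num
    have hxy0 : 0 ≤ x * y := mul_nonneg hx.1 hy.1
    have hxy1 : x * y ≤ 1 := by nlinarith [hx.1, hx.2, hy.1, hy.2]
    have := clip_facts (Mval x y N) (x*y) hxy0 hxy1 ((2:ℝ)⁻¹ ^ N) herr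
    rw [eval_form N hN x y hx hy]
    exact this
end
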